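/- arXiv:1305.6021 — 7 statements merged into one kernel-verified Lean document; each statement's English description precedes it below -/
import Mathlib

section
/- Let k ≤ n be positive integers and C > 0. Suppose v ∈ ℝⁿ satisfies ‖v‖₁ ≤ C and ‖v‖_∞ ≤ C/k. Then there exist finitely many vectors w₁, …, w_M ∈ ℝⁿ and nonnegative reals x₁, …, x_M with Σ xₜ = 1 such that v = Σ xₜ wₜ, each wₜ is k-sparse (has at most k nonzero entries), ‖wₜ‖₁ = ‖v‖₁, and ‖wₜ‖_∞ ≤ C/k for every t. -/
/-- ℓ₁ norm of a vector in ℝᵐ. -/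
noncomputable def l1 {m : ℕ} (v : Fin m → ℝ) : ℝ := ∑ i, |v i|

/-- A vector is `k`-sparse if it has at most `k` nonzero components. -/
def Sparse {m : ℕ} (k : ℕ) (v : Fin m → ℝ) : Prop :=
  ∃ s : Finset (Fin m), s.card ≤ k ∧ ∀ i ∉ s, v i = 0

/-!
With `α = C / k`, the vector `x = |v| / α` lies in the cube `[0,1]ⁿ` and has coordinate sum
`s ≤ k`. Pipage rounding: if `x` has two fractional coordinates `i ≠ j`, moving mass from `j` to
`i`, or from `i` to `j`, until one of the two coordinates reaches `0` or `1` gives two points of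
the slice `[0,1]ⁿ ∩ {∑ y = s}` with fewer fractional coordinates, and `x` lies on the segment
between them. By induction `x` is a convex combination of points of the slice with at most one
fractional coordinate, and such a point has at most `⌈s⌉ ≤ k` nonzero coordinates. Multiplying
coordinatewise by `±α` (the sign of `v`) maps `x` back to `v`, keeps sparsity, turns `∑ y = s`
into `‖w‖₁ = ‖v‖₁`, and bounds every coordinate by `α`.
-/

open Finset

section Pipage

variable {ι : Type*}

noncomputable def fractionalCoords [Fintype ι] (x : ι → ℝ) : Finset ι :=
  {i | 0 < x i ∧ x i < 1}

lemma mem_fractionalCoords [Fintype ι] {x : ι → ℝ} {i : ι} :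
    i ∈ fractionalCoords x ↔ 0 < x i ∧ x i < 1 := by
  simp [fractionalCoords]

variable [DecidableEq ι]

noncomputable def pipageShift (x : ι → ℝ) (i j : ι) : ι → ℝ :=
  x + min (1 - x i) (x j) • (Pi.single i 1 - Pi.single j 1)

lemma pipageShift_apply_left (x : ι → ℝ) {i j : ι} (hij : i ≠ j) :
    pipageShift x i j i = x i + min (1 - x i) (x j) := by
  simp [pipageShift, hij.symm]

lemma pipageShift_apply_right (x : ι → ℝ) {i j : ι} (hij : i ≠ j) :
    pipageShift x i j j = x j - min (1 - x i) (x j) := by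
  simp [pipageShift, hij, sub_eq_add_neg]

lemma pipageShift_apply_of_ne (x : ι → ℝ) {i j m : ι} (hmi : m ≠ i) (hmj : m ≠ j) :
    pipageShift x i j m = x m := by
  simp [pipageShift, hmi, hmj]

lemma pipageShift_mem_Icc {x : ι → ℝ} (hx : x ∈ Set.Icc 0 1) {i j : ι} (hij : i ≠ j) :
    pipageShift x i j ∈ Set.Icc 0 1 := by
  have hx0 : ∀ m, 0 ≤ x m := hx.1
  have hx1 : ∀ m, x m ≤ 1 := hx.2
  have hmin_left := min_le_left (1 - x i) (x j)
  have hmin_right := min_le_right (1 - x i) (x j)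
  have hmin_nonneg : 0 ≤ min (1 - x i) (x j) := le_min (by linarith [hx1 i]) (hx0 j)
  have hcoord : ∀ m, 0 ≤ pipageShift x i j m ∧ pipageShift x i j m ≤ 1 := by
    intro m
    by_cases hmi : m = i
    · subst hmi
      rw [pipageShift_apply_left x hij]
      constructor <;> linarith [hx0 m]
    by_cases hmj : m = j
    · subst hmj
      rw [pipageShift_apply_right x hij]
      constructor <;> linarith [hx1 m]
    rw [pipageShift_apply_of_ne x hmi hmj]
    exact ⟨hx0 m, hx1 m⟩
  exact ⟨fun m => (hcoord m).1, fun m => (hcoord m).2⟩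

variable [Fintype ι]

lemma sum_pipageShift (x : ι → ℝ) (i j : ι) : ∑ m, pipageShift x i j m = ∑ m, x m := by
  simp [pipageShift, sum_add_distrib, sum_sub_distrib, ← mul_sum]

lemma mem_segment_pipageShift {x : ι → ℝ} {i j : ι} (hi : i ∈ fractionalCoords x)
    (hj : j ∈ fractionalCoords x) :
    x ∈ segment ℝ (pipageShift x i j) (pipageShift x j i) := by
  rw [mem_fractionalCoords] at hi hj
  unfold pipageShift
  set a := min (1 - x i) (x j)
  set b := min (1 - x j) (x i)
  have ha : 0 < a := lt_min (by linarith) hj.1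
  have hb : 0 < b := lt_min (by linarith) hi.1
  refine ⟨b / (a + b), a / (a + b), by positivity, by positivity, by field_simp; ring, ?_⟩
  match_scalars <;> field_simp <;> ring

lemma fractionalCoords_pipageShift_ssubset {x : ι → ℝ} {i j : ι} (hij : i ≠ j)
    (hi : i ∈ fractionalCoords x) (hj : j ∈ fractionalCoords x) :
    fractionalCoords (pipageShift x i j) ⊂ fractionalCoords x := by
  refine (ssubset_iff_of_subset fun m hm => ?_).2 ?_
  · by_cases hmi : m = i
    · exact hmi ▸ hi
    by_cases hmj : m = j
    · exact hmj ▸ hj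
    rwa [mem_fractionalCoords, pipageShift_apply_of_ne x hmi hmj, ← mem_fractionalCoords] at hm
  · rcases min_choice (1 - x i) (x j) with h | h
    · refine ⟨i, hi, fun hi' => ?_⟩
      rw [mem_fractionalCoords, pipageShift_apply_left x hij, h] at hi'
      linarith
    · refine ⟨j, hj, fun hj' => ?_⟩
      rw [mem_fractionalCoords, pipageShift_apply_right x hij, h] at hj'
      linarith

theorem mem_convexHull_card_fractionalCoords_le_one {x : ι → ℝ} (hx : x ∈ Set.Icc 0 1) :
    x ∈ convexHull ℝ
      {y | y ∈ Set.Icc 0 1 ∧ ∑ i, y i = ∑ i, x i ∧ #(fractionalCoords y) ≤ 1} := by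
  induction hN : #(fractionalCoords x) using Nat.strong_induction_on generalizing x with
  | _ N ih =>
  by_cases hN1 : N ≤ 1
  · exact subset_convexHull ℝ _ ⟨hx, rfl, hN ▸ hN1⟩
  have shift_mem {i j : ι} (hij : i ≠ j) (hi : i ∈ fractionalCoords x)
      (hj : j ∈ fractionalCoords x) :
      pipageShift x i j ∈ convexHull ℝ
        {y | y ∈ Set.Icc 0 1 ∧ ∑ i, y i = ∑ i, x i ∧ #(fractionalCoords y) ≤ 1} := by
    rw [← sum_pipageShift x i j]
    exact ih _ (hN ▸ card_lt_card (fractionalCoords_pipageShift_ssubset hij hi hj))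
      (pipageShift_mem_Icc hx hij) rfl
  obtain ⟨i, hi, j, hj, hij⟩ := one_lt_card.1 (hN ▸ Nat.lt_of_not_le hN1)
  exact (convex_convexHull ℝ _).segment_subset (shift_mem hij hi hj) (shift_mem hij.symm hj hi)
    (mem_segment_pipageShift hi hj)

end Pipage

theorem card_support_le_of_card_fractionalCoords_le_one {ι : Type*} [Fintype ι] {y : ι → ℝ}
    {k : ℕ} (hy : y ∈ Set.Icc 0 1) (hsum : ∑ i, y i ≤ k) (hfrac : #(fractionalCoords y) ≤ 1) :
    #{i | y i ≠ 0} ≤ k := by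
  classical
  set ones : Finset ι := {i | y i = 1}
  have hy0 : ∀ i, 0 ≤ y i := hy.1
  have hsupp : ({i | y i ≠ 0} : Finset ι) ⊆ ones ∪ fractionalCoords y := by
    intro i hi
    simp only [ones, mem_union, mem_filter, mem_univ, true_and, mem_fractionalCoords] at hi ⊢
    by_cases h1 : y i = 1
    · exact .inl h1
    · exact .inr ⟨(hy0 i).lt_of_ne' hi, (hy.2 i).lt_of_ne h1⟩
  have hdisj : Disjoint ones (fractionalCoords y) :=
    disjoint_left.2 fun i hi hi' => (mem_fractionalCoords.1 hi').2.ne (mem_filter.1 hi).2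
  have hones : (#ones : ℝ) + ∑ i ∈ fractionalCoords y, y i ≤ k :=
    calc (#ones : ℝ) + ∑ i ∈ fractionalCoords y, y i
        = ∑ i ∈ ones ∪ fractionalCoords y, y i := by
          rw [sum_union hdisj, sum_congr rfl fun i hi => (mem_filter.1 hi).2, sum_const, nsmul_one]
      _ ≤ ∑ i, y i := sum_le_sum_of_subset_of_nonneg (subset_univ _) fun i _ _ => hy0 i
      _ ≤ k := hsum
  refine (card_le_card hsupp).trans ((card_union_le _ _).trans ?_)
  rcases Nat.le_one_iff_eq_zero_or_eq_one.1 hfrac with h0 | h1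
  · rw [card_eq_zero.1 h0, sum_empty, add_zero] at hones
    rw [h0, add_zero]
    exact_mod_cast hones
  · obtain ⟨i, hi⟩ := card_eq_one.1 h1
    rw [hi, sum_singleton] at hones
    have hyi : 0 < y i := (mem_fractionalCoords.1 (hi ▸ mem_singleton_self i)).1
    rw [h1, Nat.add_one_le_iff]
    exact_mod_cast (by linarith : (#ones : ℝ) < k)

theorem mem_convexHull_sparse_s0 {n k : ℕ} {x : Fin n → ℝ} (hx : x ∈ Set.Icc 0 1)
    (hxk : ∑ i, x i ≤ k) :
    x ∈ convexHull ℝ {y | y ∈ Set.Icc 0 1 ∧ ∑ i, y i = ∑ i, x i ∧ Sparse k y} := by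
  refine convexHull_mono ?_ (mem_convexHull_card_fractionalCoords_le_one hx)
  rintro y ⟨hy, hysum, hyfrac⟩
  exact ⟨hy, hysum, _, card_support_le_of_card_fractionalCoords_le_one hy (hysum ▸ hxk) hyfrac,
    fun i hi => by simpa using hi⟩

lemma exists_fin_sum_smul_of_mem_convexHull {R E : Type*} [Field R] [LinearOrder R]
    [IsStrictOrderedRing R] [AddCommGroup E] [Module R E] {s : Set E} {x : E}
    (hx : x ∈ convexHull R s) :
    ∃ (M : ℕ) (w : Fin M → E) (l : Fin M → R),
      (∀ t, 0 ≤ l t) ∧ ∑ t, l t = 1 ∧ x = ∑ t, l t • w t ∧ ∀ t, w t ∈ s := by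
  obtain ⟨ι, _, l, w, hl0, hl1, hw, rfl⟩ := mem_convexHull_iff_exists_fintype.1 hx
  let e := (Fintype.equivFin ι).symm
  exact ⟨_, w ∘ e, l ∘ e, fun t => hl0 _, (e.sum_comp l).trans hl1,
    (e.sum_comp fun t => l t • w t).symm, fun t => hw _⟩

lemma Sparse.mul_left {m k : ℕ} {y : Fin m → ℝ} (c : Fin m → ℝ) (h : Sparse k y) :
    Sparse k (c * y) := by
  obtain ⟨s, hs, hy⟩ := h
  exact ⟨s, hs, fun i hi => by simp [hy i hi]⟩

lemma l1_mul_of_abs_eq {m : ℕ} {c y : Fin m → ℝ} {α : ℝ} (hc : ∀ i, |c i| = α) (hy : 0 ≤ y) :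
    l1 (c * y) = α * ∑ i, y i := by
  simp [l1, abs_mul, hc, abs_of_nonneg (hy _), mul_sum]

-- `±α` rather than `α * sign (v i)`, so that `|c i| = α` also where `v i = 0`
lemma exists_abs_eq_and_eq_mul_abs_div {m : ℕ} {α : ℝ} (hα : 0 < α) (v : Fin m → ℝ) :
    ∃ c : Fin m → ℝ, (∀ i, |c i| = α) ∧ v = c * fun i => |v i| / α := by
  refine ⟨fun i => if v i < 0 then -α else α,
    fun i => by dsimp only; split_ifs <;> simp [hα.le], ?_⟩
  ext i
  simp only [Pi.mul_apply]
  split_ifs with h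
  · rw [abs_of_neg h]; field_simp
  · rw [abs_of_nonneg (not_lt.1 h)]; field_simp

theorem l1_invariant_convex_sparse_decomposition_general
    {n k : ℕ} (hk : 0 < k) {C : ℝ} (hC : 0 < C)
    (v : Fin n → ℝ) (hv1 : l1 v ≤ C) (hvinf : ∀ i, |v i| ≤ C / k) :
    ∃ (M : ℕ) (w : Fin M → Fin n → ℝ) (x : Fin M → ℝ),
      (∀ t, 0 ≤ x t) ∧ (∑ t, x t) = 1 ∧
      (v = ∑ t, x t • w t) ∧
      (∀ t, Sparse k (w t) ∧ l1 (w t) = l1 v ∧ ∀ i, |w t i| ≤ C / k) := by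
  set α := C / k
  have hα : 0 < α := by positivity
  obtain ⟨c, hc, hv⟩ := exists_abs_eq_and_eq_mul_abs_div hα v
  set x : Fin n → ℝ := fun i => |v i| / α
  have hx : x ∈ Set.Icc 0 1 := ⟨fun i => by positivity, fun i => (div_le_one hα).2 (hvinf i)⟩
  have hl1v : l1 v = α * ∑ i, x i := hv ▸ l1_mul_of_abs_eq hc hx.1
  have hxk : ∑ i, x i ≤ k := by
    refine le_of_mul_le_mul_left ?_ hα
    rw [← hl1v, div_mul_cancel₀ C (by positivity)]
    exact hv1
  have hvc := (LinearMap.mulLeft ℝ c).image_convexHull _ ▸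
    Set.mem_image_of_mem (LinearMap.mulLeft ℝ c) (mem_convexHull_sparse_s0 hx hxk)
  obtain ⟨M, w, l, hl0, hl1, hvw, hw⟩ := exists_fin_sum_smul_of_mem_convexHull hvc
  refine ⟨M, w, l, hl0, hl1, hv.trans hvw, fun t => ?_⟩
  obtain ⟨y, ⟨hy, hysum, hy_sparse⟩, hyw⟩ := hw t
  rw [← hyw, LinearMap.mulLeft_apply]
  refine ⟨hy_sparse.mul_left c, by rw [l1_mul_of_abs_eq hc hy.1, hysum, hl1v], fun i => ?_⟩
  simp [abs_mul, hc, abs_of_nonneg (hy.1 i), mul_le_of_le_one_right hα.le (hy.2 i)]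

/-- ℓ₁-norm invariant convex k-sparse decomposition. -/
theorem l1_invariant_convex_sparse_decomposition
    {n k : ℕ} (hk : 0 < k) (hkn : k ≤ n) {C : ℝ} (hC : 0 < C)
    (v : Fin n → ℝ) (hv1 : l1 v ≤ C) (hvinf : ∀ i, |v i| ≤ C / k) :
    ∃ (M : ℕ) (w : Fin M → Fin n → ℝ) (x : Fin M → ℝ),
      (∀ t, 0 ≤ x t) ∧ (∑ t, x t) = 1 ∧
      (v = ∑ t, x t • w t) ∧
      (∀ t, Sparse k (w t) ∧ l1 (w t) = l1 v ∧ ∀ i, |w t i| ≤ C / k) :=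
  l1_invariant_convex_sparse_decomposition_general hk hC v hv1 hvinf
end

section
/- Let k ≤ n be positive integers and C > 0. Suppose v ∈ ℝⁿ satisfies ‖v‖₁ ≤ C and ‖v‖_∞ ≤ C/k. Then v lies in the convex hull of the set of k-sparse vectors w ∈ ℝⁿ with ‖w‖₁ = ‖v‖₁ and ‖w‖_∞ ≤ C/k. -/
private lemma abs_shift (a t : ℝ) (ha : a ≠ 0) (ht : -|a| ≤ t) :
    |a + t * (if 0 < a then 1 else -1)| = |a| + t := by
  rcases lt_or_gt_of_ne ha with h | h
  · rw [if_neg (by linarith), abs_of_neg h] at *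
    rw [abs_of_nonpos (by linarith)]
    ring
  · rw [if_pos h, abs_of_pos h] at *
    rw [abs_of_nonneg (by linarith)]
    ring

private lemma move {n k : ℕ} {C : ℝ}
    (v : Fin n → ℝ) (i j : Fin n) (hij : i ≠ j)
    (hi0 : v i ≠ 0) (hj0 : v j ≠ 0) (t : ℝ)
    (h1 : -|v i| ≤ t) (h2 : t ≤ C / k - |v i|)
    (h3 : -(C / k - |v j|) ≤ t) (h4 : t ≤ |v j|)
    (hvinf : ∀ x, |v x| ≤ C / k) :
    let w : Fin n → ℝ := fun x => if x = i then v i + t * (if 0 < v i then 1 else -1)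
      else if x = j then v j + (-t) * (if 0 < v j then 1 else -1) else v x
    (|w i| = |v i| + t) ∧ (|w j| = |v j| - t) ∧ l1 w = l1 v ∧ (∀ x, |w x| ≤ C / k) := by
  intro w
  have hwi : |w i| = |v i| + t := by
    show |(if i = i then _ else _)| = _
    rw [if_pos rfl]
    exact abs_shift _ _ hi0 h1
  have hwj : |w j| = |v j| - t := by
    show |(if j = i then _ else _)| = _
    rw [if_neg hij.symm, if_pos rfl]
    have := abs_shift (v j) (-t) hj0 (by linarith)
    linarith [this]
  have hwx : ∀ x, x ≠ i → x ≠ j → w x = v x := by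
    intro x hxi hxj; simp [w, hxi, hxj]
  have key : ∀ x, |w x| = |v x| + ((if x = i then t else 0) + (if x = j then -t else 0)) := by
    intro x
    by_cases hxi : x = i
    · subst hxi; rw [if_pos rfl, if_neg hij, hwi]; ring
    · by_cases hxj : x = j
      · subst hxj; rw [if_neg hxi, if_pos rfl, hwj]; ring
      · rw [hwx x hxi hxj, if_neg hxi, if_neg hxj]; ring
  refine ⟨hwi, hwj, ?_, ?_⟩
  · unfold l1
    simp only [key]
    rw [Finset.sum_add_distrib, Finset.sum_add_distrib, Finset.sum_ite_eq' Finset.univ i,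
      Finset.sum_ite_eq' Finset.univ j]
    simp
  · intro x
    by_cases hxi : x = i
    · subst hxi; rw [hwi]; linarith
    · by_cases hxj : x = j
      · subst hxj; rw [hwj]; linarith
      · rw [hwx x hxi hxj]; exact hvinf x

private lemma two_partial {n k : ℕ} (hk : 0 < k) {C : ℝ} (hC : 0 < C) (v : Fin n → ℝ)
    (hv1 : l1 v ≤ C)
    (hS : k < (Finset.univ.filter (fun x => v x ≠ 0)).card) :
    2 ≤ (Finset.univ.filter (fun x => 0 < |v x| ∧ |v x| < C / k)).card := by
  set S := Finset.univ.filter (fun x => v x ≠ 0) with hSdef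
  set P := Finset.univ.filter (fun x => 0 < |v x| ∧ |v x| < C / k) with hPdef
  have hkR : (0:ℝ) < k := by exact_mod_cast hk
  have hCk : 0 < C / k := div_pos hC hkR
  have hPS : P ⊆ S := by
    intro x hx
    simp only [hPdef, Finset.mem_filter] at hx
    simp only [hSdef, Finset.mem_filter]
    exact ⟨Finset.mem_univ x, fun h => by simp [h] at hx⟩
  have hsumS : ∑ x ∈ S, |v x| ≤ C := by
    refine le_trans ?_ hv1
    unfold l1
    exact Finset.sum_le_sum_of_subset_of_nonneg (Finset.subset_univ S)
      (fun x _ _ => abs_nonneg _)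
  by_contra hlt
  push_neg at hlt
  interval_cases h : P.card
  · have hPempty : P = ∅ := Finset.card_eq_zero.mp h
    have hfull : ∀ x ∈ S, C / k ≤ |v x| := by
      intro x hx
      by_contra hx2
      push_neg at hx2
      have : x ∈ P := by
        simp only [hPdef, Finset.mem_filter]
        simp only [hSdef, Finset.mem_filter] at hx
        exact ⟨Finset.mem_univ x, abs_pos.mpr hx.2, hx2⟩
      simp [hPempty] at this
    have : (S.card : ℝ) * (C / k) ≤ ∑ x ∈ S, |v x| := by
      calc (S.card : ℝ) * (C / k) = ∑ _x ∈ S, C / k := by rw [Finset.sum_const, nsmul_eq_mul]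
      _ ≤ ∑ x ∈ S, |v x| := Finset.sum_le_sum hfull
    have hSk : (k:ℝ) + 1 ≤ (S.card : ℝ) := by exact_mod_cast hS
    have hkck : (k:ℝ) * (C / k) = C := by field_simp
    have hexp : ((k:ℝ) + 1) * (C / k) = C + C / k := by rw [add_mul, hkck, one_mul]
    have := mul_le_mul_of_nonneg_right hSk (le_of_lt hCk)
    linarith
  · obtain ⟨p, hp⟩ := Finset.card_eq_one.mp h
    have hpP : p ∈ P := by rw [hp]; exact Finset.mem_singleton_self p
    have hpP' : 0 < |v p| ∧ |v p| < C / k := by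
      simpa [hPdef] using hpP
    have hfull : ∀ x ∈ S \ P, C / k ≤ |v x| := by
      intro x hx
      rw [Finset.mem_sdiff] at hx
      by_contra hx2
      push_neg at hx2
      exact hx.2 (by
        simp only [hPdef, Finset.mem_filter]
        have := hx.1
        simp only [hSdef, Finset.mem_filter] at this
        exact ⟨Finset.mem_univ x, abs_pos.mpr this.2, hx2⟩)
    have hcardF : k ≤ (S \ P).card := by
      have := Finset.card_sdiff_of_subset hPS
      omega
    have hsplit : ∑ x ∈ S \ P, |v x| + ∑ x ∈ P, |v x| = ∑ x ∈ S, |v x| :=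
      Finset.sum_sdiff hPS
    have h1 : ((S \ P).card : ℝ) * (C / k) ≤ ∑ x ∈ S \ P, |v x| := by
      calc ((S \ P).card : ℝ) * (C / k) = ∑ _x ∈ S \ P, C / k := by
            rw [Finset.sum_const, nsmul_eq_mul]
      _ ≤ _ := Finset.sum_le_sum hfull
    have h2 : ∑ x ∈ P, |v x| = |v p| := by rw [hp, Finset.sum_singleton]
    have hkF : (k:ℝ) ≤ ((S \ P).card : ℝ) := by exact_mod_cast hcardF
    have : C < ∑ x ∈ S, |v x| := by
      rw [← hsplit, h2]
      have h3 : (k:ℝ) * (C / k) ≤ ((S \ P).card : ℝ) * (C / k) :=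
        mul_le_mul_of_nonneg_right hkF (le_of_lt hCk)
      have hkck : (k:ℝ) * (C / k) = C := by field_simp
      linarith [hpP'.1]
    linarith

private lemma aux_main {n k : ℕ} (hk : 0 < k) {C : ℝ} (hC : 0 < C) :
    ∀ N : ℕ, ∀ v : Fin n → ℝ,
      (Finset.univ.filter (fun x => 0 < |v x| ∧ |v x| < C / k)).card ≤ N →
      l1 v ≤ C → (∀ x, |v x| ≤ C / k) →
      v ∈ convexHull ℝ {w : Fin n → ℝ | Sparse k w ∧ l1 w = l1 v ∧ ∀ x, |w x| ≤ C / k} := by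
  have hkR : (0:ℝ) < k := by exact_mod_cast hk
  have hCk : 0 < C / k := div_pos hC hkR
  intro N
  induction N with
  | zero =>
      intro v hcard hv1 hvinf
      by_cases hsupp : (Finset.univ.filter (fun x => v x ≠ 0)).card ≤ k
      · exact subset_convexHull ℝ _ ⟨⟨_, hsupp, fun x hx => by
          simpa using fun h => hx (Finset.mem_filter.mpr ⟨Finset.mem_univ x, h⟩)⟩, rfl, hvinf⟩
      · push_neg at hsupp
        have := two_partial hk hC v hv1 hsupp
        omega
  | succ N ih =>
      intro v hcard hv1 hvinf
      by_cases hsupp : (Finset.univ.filter (fun x => v x ≠ 0)).card ≤ k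
      · exact subset_convexHull ℝ _ ⟨⟨_, hsupp, fun x hx => by
          simpa using fun h => hx (Finset.mem_filter.mpr ⟨Finset.mem_univ x, h⟩)⟩, rfl, hvinf⟩
      push_neg at hsupp
      have h2P := two_partial hk hC v hv1 hsupp
      set P := Finset.univ.filter (fun x => 0 < |v x| ∧ |v x| < C / k) with hPdef
      obtain ⟨i, hiP, j, hjP, hij⟩ := Finset.one_lt_card.mp (by omega : 1 < P.card)
      have hiP' : 0 < |v i| ∧ |v i| < C / k := by simpa [hPdef] using hiP
      have hjP' : 0 < |v j| ∧ |v j| < C / k := by simpa [hPdef] using hjP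
      have hi0 : v i ≠ 0 := abs_pos.mp hiP'.1
      have hj0 : v j ≠ 0 := abs_pos.mp hjP'.1
      set tp : ℝ := min (C / k - |v i|) (|v j|) with htp
      set tm : ℝ := min (|v i|) (C / k - |v j|) with htm
      have htp0 : 0 < tp := lt_min (by linarith [hiP'.2]) hjP'.1
      have htm0 : 0 < tm := lt_min hiP'.1 (by linarith [hjP'.2])
      -- the two endpoint vectors
      obtain ⟨hpi, hpj, hpl1, hpinf⟩ := move (k := k) (C := C) v i j hij hi0 hj0 tp
        (by linarith [hiP'.1]) (min_le_left _ _) (by linarith [hjP'.2]) (min_le_right _ _) hvinf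
      obtain ⟨hmi, hmj, hml1, hminf⟩ := move (k := k) (C := C) v i j hij hi0 hj0 (-tm)
        (by have := min_le_left (|v i|) (C / k - |v j|); linarith)
        (by linarith [hiP'.2])
        (by have := min_le_right (|v i|) (C / k - |v j|); linarith)
        (by linarith [hjP'.1]) hvinf
      set wp : Fin n → ℝ := fun x => if x = i then v i + tp * (if 0 < v i then 1 else -1)
        else if x = j then v j + (-tp) * (if 0 < v j then 1 else -1) else v x with hwp
      set wm : Fin n → ℝ := fun x => if x = i then v i + (-tm) * (if 0 < v i then 1 else -1)
        else if x = j then v j + (-(-tm)) * (if 0 < v j then 1 else -1) else v x with hwm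
      -- partial sets of endpoints are subsets of P minus one element
      have hsub : ∀ (w : Fin n → ℝ), (∀ x, x ≠ i → x ≠ j → w x = v x) →
          (Finset.univ.filter (fun x => 0 < |w x| ∧ |w x| < C / k)) ⊆ P := by
        intro w hw x hx
        simp only [Finset.mem_filter] at hx
        by_cases hxi : x = i
        · exact hxi ▸ hiP
        by_cases hxj : x = j
        · exact hxj ▸ hjP
        rw [hw x hxi hxj] at hx
        simp only [hPdef, Finset.mem_filter]
        exact hx
      have hcardP : ∀ (w : Fin n → ℝ), (∀ x, x ≠ i → x ≠ j → w x = v x) →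
          ∀ i' ∈ P, i' ∉ (Finset.univ.filter (fun x => 0 < |w x| ∧ |w x| < C / k)) →
          (Finset.univ.filter (fun x => 0 < |w x| ∧ |w x| < C / k)).card ≤ N := by
        intro w hw i' hi'P hi'w
        have h1 : (Finset.univ.filter (fun x => 0 < |w x| ∧ |w x| < C / k)) ⊆ P.erase i' :=
          Finset.subset_erase.mpr ⟨hsub w hw, hi'w⟩
        have h2 := Finset.card_le_card h1
        have h3 := Finset.card_erase_of_mem hi'P
        omega
      have hwpx : ∀ x, x ≠ i → x ≠ j → wp x = v x := by
        intro x hxi hxj; simp [hwp, hxi, hxj]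
      have hwmx : ∀ x, x ≠ i → x ≠ j → wm x = v x := by
        intro x hxi hxj; simp [hwm, hxi, hxj]
      -- card bound for wp
      have hcardp : (Finset.univ.filter (fun x => 0 < |wp x| ∧ |wp x| < C / k)).card ≤ N := by
        rcases min_cases (C / k - |v i|) (|v j|) with ⟨he, _⟩ | ⟨he, _⟩
        · refine hcardP wp hwpx i hiP ?_
          simp only [Finset.mem_filter]
          rw [hpi, htp.trans he]
          intro h
          linarith [h.2.2]
        · refine hcardP wp hwpx j hjP ?_
          simp only [Finset.mem_filter]
          rw [hpj, htp.trans he]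
          intro h
          linarith [h.2.1]
      have hcardm : (Finset.univ.filter (fun x => 0 < |wm x| ∧ |wm x| < C / k)).card ≤ N := by
        rcases min_cases (|v i|) (C / k - |v j|) with ⟨he, _⟩ | ⟨he, _⟩
        · refine hcardP wm hwmx i hiP ?_
          simp only [Finset.mem_filter]
          rw [hmi, htm.trans he]
          intro h
          linarith [h.2.1]
        · refine hcardP wm hwmx j hjP ?_
          simp only [Finset.mem_filter]
          rw [hmj, htm.trans he]
          intro h
          linarith [h.2.2]
      -- inductive memberships
      have hmemp := ih wp hcardp (by rw [hpl1]; exact hv1) hpinf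
      have hmemm := ih wm hcardm (by rw [hml1]; exact hv1) hminf
      rw [hpl1] at hmemp
      rw [hml1] at hmemm
      -- convex combination
      have hsum : 0 < tp + tm := by linarith
      have hcomb : (tm / (tp + tm)) • wp + (tp / (tp + tm)) • wm = v := by
        funext x
        simp only [Pi.add_apply, Pi.smul_apply, smul_eq_mul, hwp, hwm]
        by_cases hxi : x = i
        · rw [if_pos hxi, if_pos hxi]
          subst hxi
          set s : ℝ := if 0 < v x then 1 else -1 with hs
          field_simp
          ring
        by_cases hxj : x = j
        · rw [if_neg hxi, if_neg hxi, if_pos hxj, if_pos hxj]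
          subst hxj
          set s : ℝ := if 0 < v x then 1 else -1 with hs
          field_simp
          ring
        · rw [if_neg hxi, if_neg hxi, if_neg hxj, if_neg hxj]
          field_simp
          ring
      have := (convex_convexHull ℝ {w : Fin n → ℝ | Sparse k w ∧ l1 w = l1 v ∧
          ∀ x, |w x| ≤ C / k}) hmemp hmemm
        (le_of_lt (div_pos htm0 hsum)) (le_of_lt (div_pos htp0 hsum))
        (by field_simp; ring)
      rwa [hcomb] at this

/-- Every vector with `‖v‖₁ ≤ C` and `‖v‖_∞ ≤ C/k` lies in the convex hull of the
k-sparse vectors with the same ℓ₁ norm and the same ℓ∞ bound. -/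
theorem mem_convexHull_sparse
    {n k : ℕ} (hk : 0 < k) (hkn : k ≤ n) {C : ℝ} (hC : 0 < C)
    (v : Fin n → ℝ) (hv1 : l1 v ≤ C) (hvinf : ∀ i, |v i| ≤ C / k) :
    v ∈ convexHull ℝ
      {w : Fin n → ℝ | Sparse k w ∧ l1 w = l1 v ∧ ∀ i, |w i| ≤ C / k} := by
  exact aux_main hk hC n v (le_trans (Finset.card_le_univ _) (by simp)) hv1 hvinf
end

section
/- Let k ≤ n, C > 0, and v ∈ ℝⁿ with v(1) ≥ ⋯ ≥ v(n) > 0, ‖v‖₁ ≤ C, v(1) ≤ C/k, n > k. Define g₀ = Σ_{j=1}^k (v(j)+λ_j v(n)) e_j + Σ_{j=k+1}^{n−1} v(j) e_j, and for 1 ≤ t ≤ k, g_t = Σ_{j≤k, j≠t} (v(j)+λ_j v(n)) e_j + (v(t)+λ_t v(n)) e_n + Σ_{j=k+1}^{n−1} v(j) e_j. Then with y_j as defined, v = y₀ g₀ + y₁ g₁ + ⋯ + y_k g_k. -/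
noncomputable def eta (k : ℕ) (C : ℝ) (v : ℕ → ℝ) (j : ℕ) : ℝ := C / k - v j

noncomputable def lam (k : ℕ) (C : ℝ) (v : ℕ → ℝ) (j : ℕ) : ℝ :=
  eta k C v j / ∑ i ∈ Finset.range k, eta k C v i

noncomputable def yy (n k : ℕ) (C : ℝ) (v : ℕ → ℝ) (j : ℕ) : ℝ :=
  lam k C v j * v (n - 1) / (v j + lam k C v j * v (n - 1))

/-- The vectors `g_t` for `t = 0, 1, …, k` (0-indexed components; `g (t+1)` zeroes
component `t` and moves `v t + λ_t v (n-1)` to the last component; `g 0` zeroes the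
last component and redistributes `v (n-1)` among the first `k` components). -/
noncomputable def g (n k : ℕ) (C : ℝ) (v : ℕ → ℝ) (t : ℕ) (i : ℕ) : ℝ :=
  if i < k then
    (if i + 1 = t then 0 else v i + lam k C v i * v (n - 1))
  else if i = n - 1 then
    (if t = 0 then 0 else v (t - 1) + lam k C v (t - 1) * v (n - 1))
  else v i

/-
The only identity behind the theorem is `y_j (v_j + λ_j v_n) = λ_j v_n`. On a coordinate
`i < k` the vectors `g_t` all agree except `g_{i+1}`, which vanishes there, so the combination
is `(1 - y_i)(v_i + λ_i v_n) = v_i`; on the last coordinate it is `∑ λ_t v_n = v_n`; all other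
coordinates are copied from `v`. What remains is that the denominators
`∑ η_i = C - ∑_{i<k} v_i` and `v_j + λ_j v_n` are positive.
-/

theorem Finset.sum_mul_ite_eq_zero {ι R : Type*} [CommRing R] [DecidableEq ι]
    {s : Finset ι} {i : ι} (hi : i ∈ s) (f : ι → R) (c : R) :
    ∑ t ∈ s, f t * (if t = i then 0 else c) = (∑ t ∈ s, f t - f i) * c := by
  have hsplit : ∀ t, f t * (if t = i then 0 else c) = f t * c - if t = i then f t * c else 0 :=
    fun t => by split_ifs <;> ring
  simp only [hsplit, Finset.sum_sub_distrib, Finset.sum_ite_eq', if_pos hi, Finset.sum_mul,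
    sub_mul]

noncomputable def convexCombination (n k : ℕ) (C : ℝ) (v : ℕ → ℝ) (i : ℕ) : ℝ :=
  (1 - ∑ j ∈ Finset.range k, yy n k C v j) * g n k C v 0 i
    + ∑ t ∈ Finset.range k, yy n k C v t * g n k C v (t + 1) i

section Combination

variable {n k j : ℕ} {C : ℝ} {v : ℕ → ℝ}

theorem sum_eta_eq (hk : k ≠ 0) :
    ∑ j ∈ Finset.range k, eta k C v j = C - ∑ j ∈ Finset.range k, v j := by
  simp only [eta, Finset.sum_sub_distrib, Finset.sum_const, Finset.card_range, nsmul_eq_mul]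
  field_simp

theorem sum_lam_eq_one (h : ∑ j ∈ Finset.range k, eta k C v j ≠ 0) :
    ∑ j ∈ Finset.range k, lam k C v j = 1 := by
  simp only [lam, ← Finset.sum_div, div_self h]

theorem yy_mul (h : v j + lam k C v j * v (n - 1) ≠ 0) :
    yy n k C v j * (v j + lam k C v j * v (n - 1)) = lam k C v j * v (n - 1) :=
  div_mul_cancel₀ _ h

theorem convexCombination_of_lt {i : ℕ} (hi : i < k)
    (hD : v i + lam k C v i * v (n - 1) ≠ 0) :
    convexCombination n k C v i = v i := by
  have hg : ∀ t, g n k C v (t + 1) i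
      = if t = i then 0 else v i + lam k C v i * v (n - 1) := fun t => by
    simp only [g, hi, if_true, add_left_inj, eq_comm (a := i)]
  simp only [convexCombination, hg, Finset.sum_mul_ite_eq_zero (Finset.mem_range.2 hi)]
  simp only [g, hi, if_true, Nat.succ_ne_zero, if_false]
  linear_combination -yy_mul hD

theorem convexCombination_last (hkn : k < n)
    (hD : ∀ t < k, v t + lam k C v t * v (n - 1) ≠ 0)
    (hη : ∑ j ∈ Finset.range k, eta k C v j ≠ 0) :
    convexCombination n k C v (n - 1) = v (n - 1) := by
  have hnk : ¬ n - 1 < k := by omega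
  have hg : ∀ t ∈ Finset.range k, yy n k C v t * g n k C v (t + 1) (n - 1)
      = lam k C v t * v (n - 1) := fun t ht => by
    simpa [g, hnk] using yy_mul (hD t (Finset.mem_range.1 ht))
  simp only [convexCombination, Finset.sum_congr rfl hg, ← Finset.sum_mul, sum_lam_eq_one hη]
  simp [g, hnk]

theorem convexCombination_of_ge {i : ℕ} (hki : k ≤ i) (hin : i ≠ n - 1) :
    convexCombination n k C v i = v i := by
  have hg : ∀ t, g n k C v t i = v i := fun t => by simp [g, hin, not_lt.2 hki]
  simp only [convexCombination, hg, ← Finset.sum_mul]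
  ring

theorem sum_eta_pos (hk : k ≠ 0) (hkn : k < n) (hpos : ∀ i < n, 0 < v i)
    (hv1 : ∑ i ∈ Finset.range n, |v i| ≤ C) :
    0 < ∑ j ∈ Finset.range k, eta k C v j := by
  have hlt : ∑ j ∈ Finset.range k, v j < ∑ j ∈ Finset.range n, v j :=
    Finset.sum_lt_sum_of_subset (Finset.range_subset_range.2 hkn.le) (i := n - 1)
      (by simp; omega) (by simp; omega) (hpos _ (by omega))
      fun j hj _ => (hpos j (Finset.mem_range.1 hj)).le
  have hle : ∑ j ∈ Finset.range n, v j ≤ C :=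
    (Finset.sum_le_sum fun j _ => le_abs_self (v j)).trans hv1
  rw [sum_eta_eq hk]
  linarith

theorem lam_nonneg (hη : 0 < ∑ j ∈ Finset.range k, eta k C v j) (hj : v j ≤ C / k) :
    0 ≤ lam k C v j :=
  div_nonneg (sub_nonneg.2 hj) hη.le

end Combination

theorem convex_combination_eq_general
    (n k : ℕ) (hk : 0 < k) (hkn : k < n) (C : ℝ)
    (v : ℕ → ℝ)
    (hsort : ∀ i j, i ≤ j → j < n → v j ≤ v i)
    (hpos : ∀ i < n, 0 < v i)
    (hv1 : ∑ i ∈ Finset.range n, |v i| ≤ C)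
    (hmax : v 0 ≤ C / k) :
    ∀ i < n,
      v i = (1 - ∑ j ∈ Finset.range k, yy n k C v j) * g n k C v 0 i
              + ∑ t ∈ Finset.range k, yy n k C v t * g n k C v (t + 1) i := by
  intro i hi
  have hη := sum_eta_pos hk.ne' hkn hpos hv1
  have hD : ∀ t < k, v t + lam k C v t * v (n - 1) ≠ 0 := fun t ht =>
    (add_pos_of_pos_of_nonneg (hpos t (by omega)) <| mul_nonneg
      (lam_nonneg hη ((hsort 0 t t.zero_le (by omega)).trans hmax))
      (hpos _ (by omega)).le).ne'
  change v i = convexCombination n k C v i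
  rcases lt_or_ge i k with hik | hki
  · exact (convexCombination_of_lt hik (hD i hik)).symm
  by_cases hin : i = n - 1
  · subst hin
    exact (convexCombination_last hkn hD hη.ne').symm
  · exact (convexCombination_of_ge hki hin).symm

/-- `v` is the convex combination `y₀ g₀ + y₁ g₁ + ⋯ + y_k g_k`. -/
theorem convex_combination_eq
    (n k : ℕ) (hk : 0 < k) (hkn : k < n) (C : ℝ) (hC : 0 < C)
    (v : ℕ → ℝ)
    (hsort : ∀ i j, i ≤ j → j < n → v j ≤ v i)
    (hpos : ∀ i < n, 0 < v i)
    (hv1 : ∑ i ∈ Finset.range n, |v i| ≤ C)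
    (hmax : v 0 ≤ C / k) :
    ∀ i < n,
      v i = (1 - ∑ j ∈ Finset.range k, yy n k C v j) * g n k C v 0 i
              + ∑ t ∈ Finset.range k, yy n k C v t * g n k C v (t + 1) i :=
  convex_combination_eq_general n k hk hkn C v hsort hpos hv1 hmax
end

section
/- Let h ∈ ℝᵖ, T = {1,…,k}, S = {k+1,…,p}, with |h(1)| ≥ ⋯ ≥ |h(p)| and ‖h_S‖₁ ≤ ‖h_T‖₁. Then h_S is a convex combination Σ_{j=1}^M x_j w_j of k-sparse vectors w_j supported on S with ‖w_j‖₁ = ‖h_S‖₁ and ‖w_j‖_∞ ≤ ‖h_T‖₁/k; in particular each such w_j satisfies ‖w_j‖₂ ≤ √(k·(‖h_T‖₁/k)²) = ‖h_T‖₁/√k. -/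
noncomputable def l2 {m : ℕ} (v : Fin m → ℝ) : ℝ := Real.sqrt (∑ i, (v i)^2)

open Finset

lemma abs_add_mul_sign (r t : ℝ) (hr : r ≠ 0) (ht : 0 ≤ t) :
    |r + t * Real.sign r| = |r| + t := by
  rcases hr.lt_or_gt with h | h
  · rw [Real.sign_of_neg h, abs_of_neg h, abs_of_neg (by linarith)]; ring
  · rw [Real.sign_of_pos h, abs_of_pos h, abs_of_pos (by linarith)]; ring

lemma abs_sub_mul_sign (r t : ℝ) (ht : 0 ≤ t) (ht' : t ≤ |r|) :
    |r - t * Real.sign r| = |r| - t := by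
  rcases lt_trichotomy r 0 with h | h | h
  · rw [abs_of_neg h] at ht' ⊢
    rw [Real.sign_of_neg h, abs_of_nonpos (by linarith)]; ring
  · subst h; simp only [abs_zero] at ht' ⊢
    have : t = 0 := le_antisymm ht' ht
    simp [this]
  · rw [abs_of_pos h] at ht' ⊢
    rw [Real.sign_of_pos h, abs_of_nonneg (by linarith)]; ring

/-- Shift mass `t` from coordinate `b` to coordinate `a`, preserving `ℓ¹` norm. -/
noncomputable def shifted {p : ℕ} (v : Fin p → ℝ) (a b : Fin p) (t : ℝ) : Fin p → ℝ :=
  fun i => if i = a then v a + t * Real.sign (v a)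
    else if i = b then v b - t * Real.sign (v b) else v i

lemma shifted_abs {p : ℕ} (v : Fin p → ℝ) (a b : Fin p) (t : ℝ)
    (hab : a ≠ b) (ha : v a ≠ 0) (ht0 : 0 ≤ t) (htb : t ≤ |v b|) :
    ∀ i, |shifted v a b t i| = |v i| + (if i = a then t else if i = b then -t else 0) := by
  intro i
  unfold shifted
  by_cases hia : i = a
  · subst hia; rw [if_pos rfl, if_pos rfl, abs_add_mul_sign _ _ ha ht0]
  · by_cases hib : i = b
    · subst hib; rw [if_neg hia, if_pos rfl, if_neg hia, if_pos rfl,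
        abs_sub_mul_sign _ _ ht0 htb]; ring
    · simp [hia, hib]

lemma shifted_l1 {p : ℕ} (v : Fin p → ℝ) (a b : Fin p) (t : ℝ)
    (hab : a ≠ b) (ha : v a ≠ 0) (ht0 : 0 ≤ t) (htb : t ≤ |v b|) :
    ∑ i, |shifted v a b t i| = ∑ i, |v i| := by
  have habs := shifted_abs v a b t hab ha ht0 htb
  calc ∑ i, |shifted v a b t i|
      = ∑ i, (|v i| + (if i = a then t else if i = b then -t else 0)) := by
        exact Finset.sum_congr rfl fun i _ => habs i
    _ = ∑ i, |v i| + ∑ i, (if i = a then t else if i = b then -t else 0) := by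
        rw [Finset.sum_add_distrib]
    _ = ∑ i, |v i| := by
        have : ∀ i : Fin p, (if i = a then t else if i = b then -t else 0)
            = (if i = a then t else 0) + (if i = b then -t else 0) := by
          intro i
          by_cases hia : i = a
          · subst hia; simp [hab]
          · by_cases hib : i = b
            · subst hib; simp [hia, Ne.symm hab]
            · simp [hia, hib]
        rw [Finset.sum_congr rfl fun i _ => this i, Finset.sum_add_distrib,
          Finset.sum_ite_eq' Finset.univ a (fun _ => t),
          Finset.sum_ite_eq' Finset.univ b (fun _ => -t)]
        simp

lemma shifted_supp {p : ℕ} (v : Fin p → ℝ) (a b : Fin p) (t : ℝ)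
    (ha : v a ≠ 0) (hb : v b ≠ 0) :
    ∀ i, shifted v a b t i ≠ 0 → v i ≠ 0 := by
  intro i hi
  unfold shifted at hi
  by_cases hia : i = a
  · subst hia; exact ha
  · by_cases hib : i = b
    · subst hib; exact hb
    · simpa [hia, hib] using hi

lemma shifted_combine {p : ℕ} (v : Fin p → ℝ) (a b : Fin p) (lam mu t₁ t₂ : ℝ)
    (hab : a ≠ b) (hlm : lam + mu = 1) (hlt : lam * t₁ = mu * t₂) :
    lam • shifted v a b t₁ + mu • shifted v b a t₂ = v := by
  funext i
  simp only [Pi.add_apply, Pi.smul_apply, smul_eq_mul, shifted]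
  split_ifs with h1 h2 h3 <;> subst_vars <;>
    first
      | exact absurd rfl hab
      | linear_combination v i * hlm + Real.sign (v i) * hlt
      | linear_combination v i * hlm - Real.sign (v i) * hlt
      | linear_combination v i * hlm


/-- Existence of a convex decomposition into `k`-sparse pieces. -/
def Decomp {p : ℕ} (k : ℕ) (S : Finset (Fin p)) (α : ℝ) (v : Fin p → ℝ) : Prop :=
  ∃ (M : ℕ) (w : Fin M → Fin p → ℝ) (x : Fin M → ℝ),
    (∀ j, 0 ≤ x j) ∧ (∑ j, x j) = 1 ∧ v = ∑ j, x j • w j ∧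
    ∀ j, Sparse k (w j) ∧ (∀ i, w j i ≠ 0 → i ∈ S) ∧
      (∑ i, |w j i|) = (∑ i, |v i|) ∧ (∀ i, |w j i| ≤ α)

lemma decomp_combine {p : ℕ} {k : ℕ} {S : Finset (Fin p)} {α : ℝ}
    {v v1 v2 : Fin p → ℝ} {lam mu : ℝ}
    (hl0 : 0 ≤ lam) (hm0 : 0 ≤ mu) (hlm : lam + mu = 1)
    (hv : lam • v1 + mu • v2 = v)
    (h1 : ∑ i, |v1 i| = ∑ i, |v i|) (h2 : ∑ i, |v2 i| = ∑ i, |v i|)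
    (H1 : Decomp k S α v1) (H2 : Decomp k S α v2) : Decomp k S α v := by
  obtain ⟨M1, w1, x1, hx1, hs1, hv1, hw1⟩ := H1
  obtain ⟨M2, w2, x2, hx2, hs2, hv2, hw2⟩ := H2
  refine ⟨M1 + M2, Fin.append w1 w2,
    Fin.append (fun j => lam * x1 j) (fun j => mu * x2 j), ?_, ?_, ?_, ?_⟩
  · intro j
    refine Fin.addCases (fun j => ?_) (fun j => ?_) j
    · rw [Fin.append_left]; exact mul_nonneg hl0 (hx1 j)
    · rw [Fin.append_right]; exact mul_nonneg hm0 (hx2 j)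
  · rw [Fin.sum_univ_add]
    simp only [Fin.append_left, Fin.append_right, ← Finset.mul_sum, hs1, hs2]
    simpa using hlm
  · rw [Fin.sum_univ_add]
    simp only [Fin.append_left, Fin.append_right]
    rw [← hv, hv1, hv2, Finset.smul_sum, Finset.smul_sum]
    congr 1 <;> exact Finset.sum_congr rfl fun j _ => (mul_smul _ _ _).symm
  · intro j
    refine Fin.addCases (fun j => ?_) (fun j => ?_) j
    · simp only [Fin.append_left]
      exact ⟨(hw1 j).1, (hw1 j).2.1, by rw [(hw1 j).2.2.1, h1], (hw1 j).2.2.2⟩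
    · simp only [Fin.append_right]
      exact ⟨(hw2 j).1, (hw2 j).2.1, by rw [(hw2 j).2.2.1, h2], (hw2 j).2.2.2⟩

lemma decomp_base {p k : ℕ} {S : Finset (Fin p)} {α : ℝ} {v : Fin p → ℝ}
    (hinf : ∀ i, |v i| ≤ α) (hS : ∀ i, v i ≠ 0 → i ∈ S)
    (hsupp : (Finset.univ.filter (fun i => v i ≠ 0)).card ≤ k) : Decomp k S α v := by
  refine ⟨1, fun _ => v, fun _ => 1, fun _ => zero_le_one, by simp, by
    funext i; simp, fun _ => ⟨⟨Finset.univ.filter (fun i => v i ≠ 0), hsupp,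
      fun i hi => by simpa using hi⟩, hS, rfl, hinf⟩⟩

lemma frac_two {p k : ℕ} {α : ℝ} {v : Fin p → ℝ}
    (hinf : ∀ i, |v i| ≤ α) (hA : ∑ i, |v i| ≤ k * α)
    (hsupp : k < (Finset.univ.filter (fun i => v i ≠ 0)).card) :
    2 ≤ (Finset.univ.filter (fun i => 0 < |v i| ∧ |v i| < α)).card := by
  set T := Finset.univ.filter (fun i => v i ≠ 0) with hTdef
  set F := Finset.univ.filter (fun i => 0 < |v i| ∧ |v i| < α) with hFdef
  obtain ⟨i₀, hi₀⟩ : T.Nonempty := card_pos.mp (by omega)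
  have hα : 0 < α :=
    lt_of_lt_of_le (abs_pos.mpr (mem_filter.mp hi₀).2) (hinf i₀)
  by_contra hc
  push_neg at hc
  have hFT : F ⊆ T := fun i hi =>
    mem_filter.mpr ⟨mem_univ i, abs_pos.mp (mem_filter.mp hi).2.1⟩
  have hsdiff : ∀ i ∈ T \ F, |v i| = α := by
    intro i hi
    obtain ⟨hiT, hiF⟩ := mem_sdiff.mp hi
    have h1 : 0 < |v i| := abs_pos.mpr (mem_filter.mp hiT).2
    by_contra hne
    exact hiF (mem_filter.mpr ⟨mem_univ i, h1, lt_of_le_of_ne (hinf i) hne⟩)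
  have hcard : (T \ F).card = T.card - F.card := card_sdiff_of_subset hFT
  have hsum : ∑ i ∈ T, |v i| ≤ ∑ i, |v i| :=
    sum_le_sum_of_subset_of_nonneg (subset_univ T) (fun i _ _ => abs_nonneg _)
  have hsplit : ∑ i ∈ T \ F, |v i| + ∑ i ∈ F, |v i| = ∑ i ∈ T, |v i| := sum_sdiff hFT
  have hsd : ∑ i ∈ T \ F, |v i| = ((T \ F).card : ℝ) * α := by
    rw [sum_congr rfl hsdiff, sum_const, nsmul_eq_mul]
  interval_cases hFc : F.card
  · have hF0 : F = ∅ := card_eq_zero.mp hFc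
    have h1 : (k + 1 : ℝ) ≤ ((T \ F).card : ℝ) := by
      have : k + 1 ≤ (T \ F).card := by omega
      exact_mod_cast this
    nlinarith [hsum, hsplit, hsd, sum_nonneg (fun i (_ : i ∈ F) => abs_nonneg (v i))]
  · obtain ⟨f, hf⟩ := card_eq_one.mp hFc
    have hfF : f ∈ F := hf ▸ mem_singleton_self f
    have hfpos : 0 < |v f| := (mem_filter.mp hfF).2.1
    have hsF : ∑ i ∈ F, |v i| = |v f| := by rw [hf, sum_singleton]
    have h1 : (k : ℝ) ≤ ((T \ F).card : ℝ) := by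
      have : k ≤ (T \ F).card := by omega
      exact_mod_cast this
    nlinarith [hsum, hsplit, hsd]

lemma key {p : ℕ} (k : ℕ) (α : ℝ) (S : Finset (Fin p)) :
    ∀ N : ℕ, ∀ v : Fin p → ℝ,
    (Finset.univ.filter (fun i => 0 < |v i| ∧ |v i| < α)).card ≤ N →
    (∀ i, |v i| ≤ α) → (∀ i, v i ≠ 0 → i ∈ S) → (∑ i, |v i|) ≤ k * α →
    Decomp k S α v := by
  intro N
  induction N with
  | zero =>
    intro v hF hinf hS hA
    by_cases hsupp : (Finset.univ.filter (fun i => v i ≠ 0)).card ≤ k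
    · exact decomp_base hinf hS hsupp
    · push_neg at hsupp
      have := frac_two hinf hA hsupp
      omega
  | succ n ih =>
    intro v hF hinf hS hA
    by_cases hsupp : (Finset.univ.filter (fun i => v i ≠ 0)).card ≤ k
    · exact decomp_base hinf hS hsupp
    push_neg at hsupp
    have hF2 := frac_two hinf hA hsupp
    set F := Finset.univ.filter (fun i => 0 < |v i| ∧ |v i| < α) with hFdef
    obtain ⟨a, haF, b, hbF, hab⟩ := one_lt_card.mp (by omega : 1 < F.card)
    have ha1 : 0 < |v a| := (mem_filter.mp haF).2.1
    have ha2 : |v a| < α := (mem_filter.mp haF).2.2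
    have hb1 : 0 < |v b| := (mem_filter.mp hbF).2.1
    have hb2 : |v b| < α := (mem_filter.mp hbF).2.2
    have ha0 : v a ≠ 0 := abs_pos.mp ha1
    have hb0 : v b ≠ 0 := abs_pos.mp hb1
    set t₁ := min (α - |v a|) |v b| with ht₁def
    set t₂ := min (α - |v b|) |v a| with ht₂def
    have ht₁ : 0 < t₁ := lt_min (by linarith) hb1
    have ht₂ : 0 < t₂ := lt_min (by linarith) ha1
    have ht₁b : t₁ ≤ |v b| := min_le_right _ _
    have ht₁a : |v a| + t₁ ≤ α := by
      have := min_le_left (α - |v a|) |v b|; linarith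
    have ht₂a : t₂ ≤ |v a| := min_le_right _ _
    have ht₂b : |v b| + t₂ ≤ α := by
      have := min_le_left (α - |v b|) |v a|; linarith
    set v1 := shifted v a b t₁ with hv1def
    set v2 := shifted v b a t₂ with hv2def
    have habs1 := shifted_abs v a b t₁ hab ha0 ht₁.le ht₁b
    have habs2 := shifted_abs v b a t₂ (Ne.symm hab) hb0 ht₂.le ht₂a
    have hl1 : ∑ i, |v1 i| = ∑ i, |v i| := shifted_l1 v a b t₁ hab ha0 ht₁.le ht₁b
    have hl2 : ∑ i, |v2 i| = ∑ i, |v i| := shifted_l1 v b a t₂ (Ne.symm hab) hb0 ht₂.le ht₂a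
    have hinf1 : ∀ i, |v1 i| ≤ α := by
      intro i; rw [habs1 i]; split_ifs with h1 h2
      · subst h1; linarith
      · subst h2; linarith [hinf i, ht₁]
      · linarith [hinf i]
    have hinf2 : ∀ i, |v2 i| ≤ α := by
      intro i; rw [habs2 i]; split_ifs with h1 h2
      · subst h1; linarith
      · subst h2; linarith [hinf i, ht₂]
      · linarith [hinf i]
    have hS1 : ∀ i, v1 i ≠ 0 → i ∈ S := fun i hi =>
      hS i (shifted_supp v a b t₁ ha0 hb0 i hi)
    have hS2 : ∀ i, v2 i ≠ 0 → i ∈ S := fun i hi =>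
      hS i (shifted_supp v b a t₂ hb0 ha0 i hi)
    have hcard1 : (Finset.univ.filter (fun i => 0 < |v1 i| ∧ |v1 i| < α)).card ≤ n := by
      have hsub : (Finset.univ.filter (fun i => 0 < |v1 i| ∧ |v1 i| < α))
          ⊆ F.erase (if α - |v a| ≤ |v b| then a else b) := by
        intro i hi
        obtain ⟨-, hi1, hi2⟩ := mem_filter.mp hi
        rw [mem_erase]
        split_ifs with hc
        · have hta : t₁ = α - |v a| := min_eq_left hc
          have hia : i ≠ a := by
            intro h; subst h
            rw [habs1 i, if_pos rfl] at hi2; linarith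
          refine ⟨hia, ?_⟩
          by_cases hib : i = b
          · subst hib; exact hbF
          · rw [habs1 i, if_neg hia, if_neg hib, add_zero] at hi1 hi2
            exact mem_filter.mpr ⟨mem_univ i, hi1, hi2⟩
        · push_neg at hc
          have htb : t₁ = |v b| := min_eq_right hc.le
          have hib : i ≠ b := by
            intro h; subst h
            rw [habs1 i, if_neg (Ne.symm hab), if_pos rfl] at hi1; linarith
          refine ⟨hib, ?_⟩
          by_cases hia : i = a
          · subst hia; exact haF
          · rw [habs1 i, if_neg hia, if_neg hib, add_zero] at hi1 hi2
            exact mem_filter.mpr ⟨mem_univ i, hi1, hi2⟩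
      have hcF : (if α - |v a| ≤ |v b| then a else b) ∈ F := by
        split_ifs; exacts [haF, hbF]
      calc (Finset.univ.filter (fun i => 0 < |v1 i| ∧ |v1 i| < α)).card
          ≤ (F.erase _).card := card_le_card hsub
        _ = F.card - 1 := card_erase_of_mem hcF
        _ ≤ n := by omega
    have hcard2 : (Finset.univ.filter (fun i => 0 < |v2 i| ∧ |v2 i| < α)).card ≤ n := by
      have hsub : (Finset.univ.filter (fun i => 0 < |v2 i| ∧ |v2 i| < α))
          ⊆ F.erase (if α - |v b| ≤ |v a| then b else a) := by
        intro i hi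
        obtain ⟨-, hi1, hi2⟩ := mem_filter.mp hi
        rw [mem_erase]
        split_ifs with hc
        · have hta : t₂ = α - |v b| := min_eq_left hc
          have hib : i ≠ b := by
            intro h; subst h
            rw [habs2 i, if_pos rfl] at hi2; linarith
          refine ⟨hib, ?_⟩
          by_cases hia : i = a
          · subst hia; exact haF
          · rw [habs2 i, if_neg hib, if_neg hia, add_zero] at hi1 hi2
            exact mem_filter.mpr ⟨mem_univ i, hi1, hi2⟩
        · push_neg at hc
          have htb : t₂ = |v a| := min_eq_right hc.le
          have hia : i ≠ a := by
            intro h; subst h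
            rw [habs2 i, if_neg hab, if_pos rfl] at hi1; linarith
          refine ⟨hia, ?_⟩
          by_cases hib : i = b
          · subst hib; exact hbF
          · rw [habs2 i, if_neg hib, if_neg hia, add_zero] at hi1 hi2
            exact mem_filter.mpr ⟨mem_univ i, hi1, hi2⟩
      have hcF : (if α - |v b| ≤ |v a| then b else a) ∈ F := by
        split_ifs; exacts [hbF, haF]
      calc (Finset.univ.filter (fun i => 0 < |v2 i| ∧ |v2 i| < α)).card
          ≤ (F.erase _).card := card_le_card hsub
        _ = F.card - 1 := card_erase_of_mem hcF
        _ ≤ n := by omega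
    have D1 := ih v1 hcard1 hinf1 hS1 (by rw [hl1]; exact hA)
    have D2 := ih v2 hcard2 hinf2 hS2 (by rw [hl2]; exact hA)
    have hts : 0 < t₁ + t₂ := by linarith
    have hne : t₁ + t₂ ≠ 0 := hts.ne'
    have hlm : t₂/(t₁+t₂) + t₁/(t₁+t₂) = 1 := by
      rw [← add_div, add_comm t₂ t₁]; exact div_self hne
    refine decomp_combine (lam := t₂/(t₁+t₂)) (mu := t₁/(t₁+t₂))
      (by positivity) (by positivity) hlm ?_ hl1 hl2 D1 D2
    exact shifted_combine v a b _ _ t₁ t₂ hab hlm (by ring)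

/-- With `T = {0,…,k-1}` the `k` largest-magnitude coordinates and `S` its
complement, if `‖h_S‖₁ ≤ ‖h_T‖₁` then `h_S` is a convex combination of `k`-sparse
vectors supported on `S` with `‖w_j‖₁ = ‖h_S‖₁`, `‖w_j‖_∞ ≤ ‖h_T‖₁/k`, and
`‖w_j‖₂ ≤ ‖h_T‖₁/√k`. -/
theorem tail_convex_sparse_decomposition
    {p k : ℕ} (hk : 0 < k) (hkp : k ≤ p) (h : Fin p → ℝ)
    (hsort : ∀ i j : Fin p, i ≤ j → |h j| ≤ |h i|)
    (hcone : ∑ i ∈ Finset.univ.filter (fun i : Fin p => k ≤ i.val), |h i|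
              ≤ ∑ i ∈ Finset.univ.filter (fun i : Fin p => i.val < k), |h i|) :
    ∃ (M : ℕ) (w : Fin M → Fin p → ℝ) (x : Fin M → ℝ),
      (∀ j, 0 ≤ x j) ∧ (∑ j, x j) = 1 ∧
      ((fun i : Fin p => if k ≤ i.val then h i else 0) = ∑ j, x j • w j) ∧
      ∀ j, Sparse k (w j) ∧ (∀ i : Fin p, w j i ≠ 0 → k ≤ i.val) ∧
        l1 (w j) = ∑ i ∈ Finset.univ.filter (fun i : Fin p => k ≤ i.val), |h i| ∧
        (∀ i, |w j i| ≤ (∑ i ∈ Finset.univ.filter (fun i : Fin p => i.val < k), |h i|) / k) ∧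
        l2 (w j) ≤ (∑ i ∈ Finset.univ.filter (fun i : Fin p => i.val < k), |h i|) / Real.sqrt k := by
  classical
  set C := ∑ i ∈ Finset.univ.filter (fun i : Fin p => i.val < k), |h i| with hCdef
  set A := ∑ i ∈ Finset.univ.filter (fun i : Fin p => k ≤ i.val), |h i| with hAdef
  set v : Fin p → ℝ := fun i => if k ≤ i.val then h i else 0 with hvdef
  set S : Finset (Fin p) := Finset.univ.filter (fun i : Fin p => k ≤ i.val) with hSdef
  have hC0 : 0 ≤ C := Finset.sum_nonneg fun i _ => abs_nonneg _
  have hkR : (0:ℝ) < k := by exact_mod_cast hk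
  have hcardT : (Finset.univ.filter (fun i : Fin p => i.val < k)).card = k := by
    apply Finset.card_eq_of_bijective (fun i hi => (⟨i, lt_of_lt_of_le hi hkp⟩ : Fin p))
    · intro a ha
      simp only [Finset.mem_filter] at ha
      exact ⟨a.val, ha.2, by simp⟩
    · intro i hi; simp [hi]
    · intro i j hi hj hij
      simpa using congrArg Fin.val hij
  have hvabs : ∀ i, |v i| = if k ≤ i.val then |h i| else 0 := by
    intro i; rw [hvdef]; dsimp only; split_ifs <;> simp
  have hsum_v : ∑ i, |v i| = A := by
    rw [Finset.sum_congr rfl (fun i _ => hvabs i), ← Finset.sum_filter]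
  have hinfv : ∀ i, |v i| ≤ C / k := by
    intro i; rw [hvabs i]; split_ifs with hi
    · rw [le_div_iff₀ hkR]
      have hle : ∀ j ∈ Finset.univ.filter (fun j : Fin p => j.val < k), |h i| ≤ |h j| := by
        intro j hj
        have hjk : j.val < k := (Finset.mem_filter.mp hj).2
        exact hsort j i (by rw [Fin.le_def]; omega)
      calc |h i| * k = ∑ _j ∈ Finset.univ.filter (fun j : Fin p => j.val < k), |h i| := by
            rw [Finset.sum_const, hcardT, nsmul_eq_mul, mul_comm]
        _ ≤ C := Finset.sum_le_sum hle
    · positivity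
  have hSv : ∀ i, v i ≠ 0 → i ∈ S := by
    intro i hi
    by_cases h' : k ≤ i.val
    · exact Finset.mem_filter.mpr ⟨Finset.mem_univ _, h'⟩
    · exact absurd (by rw [hvdef]; simp [h']) hi
  have hAle : ∑ i, |v i| ≤ k * (C / k) := by
    rw [hsum_v, mul_div_cancel₀ C hkR.ne']
    exact hcone
  obtain ⟨M, w, x, hx, hxs, hvd, hw⟩ := key k (C / k) S _ v le_rfl hinfv hSv hAle
  refine ⟨M, w, x, hx, hxs, hvd, fun j => ?_⟩
  obtain ⟨hsp, hsupp2, hl1', hinf'⟩ := hw j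
  refine ⟨hsp, fun i hi => (Finset.mem_filter.mp (hsupp2 i hi)).2, ?_, hinf', ?_⟩
  · rw [l1, hl1', hsum_v]
  · rw [l2]
    have hAC : ∑ i, |w j i| ≤ C := by
      rw [hl1', hsum_v]; exact hcone
    have h1 : ∑ i, (w j i)^2 ≤ (C/k) * C := by
      calc ∑ i, (w j i)^2 ≤ ∑ i, (C/k) * |w j i| := by
            refine Finset.sum_le_sum fun i _ => ?_
            nlinarith [sq_abs (w j i), abs_nonneg (w j i), hinf' i]
        _ = (C/k) * ∑ i, |w j i| := by rw [Finset.mul_sum]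
        _ ≤ (C/k) * C := by
            refine mul_le_mul_of_nonneg_left hAC (by positivity)
    calc Real.sqrt (∑ i, (w j i)^2) ≤ Real.sqrt ((C/k) * C) := Real.sqrt_le_sqrt h1
      _ = C / Real.sqrt k := by
          rw [show (C/k) * C = C^2 / k by ring, Real.sqrt_div (sq_nonneg C),
            Real.sqrt_sq hC0]
end

section
/- Let Φ ∈ ℝ^{n×p} have k-restricted isometry constant δ_k and (k,k)-restricted orthogonality constant θ_{k,k} with δ_k + θ_{k,k} < 1. Let β ∈ ℝᵖ be k-sparse, y = Φβ, and let β̂ be any minimizer of ‖γ‖₁ subject to Φγ = y. Then β̂ = β. -/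
/-!
The error `h = βhat - β` lies in the kernel of `Φ`, and ℓ₁-minimality gives the cone condition
`‖h_{Sᶜ}‖₁ ≤ ‖h_S‖₁` on the support `S` of `β`, hence also on the set `T` of the `k` largest
entries of `|h|`. Split `h = u + v` with `u` supported on `T` and put `α = ‖u‖₁ / k`, so that
`‖v‖_∞ ≤ α` and `‖v‖₁ ≤ k α`. A linear functional on this polytope is dominated by its value at a
`k`-sparse vector with entries bounded by `α` (fractional knapsack), whose ℓ₂-norm is at most
`√k α ≤ ‖u‖₂`. Hence `(1 - δ) ‖u‖₂² ≤ ‖Φu‖₂² = -⟨Φv, Φu⟩ ≤ θ ‖u‖₂²`, which forces `u = 0`, and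
then `h = 0`.
-/

open Finset Matrix

section TopSet

variable {ι : Type*}

theorem le_sum_div_card_of_forall_le {a : ι → ℝ} {T : Finset ι}
    (hT : ∀ i ∉ T, ∀ j ∈ T, a i ≤ a j) (hne : T.Nonempty) {i : ι} (hi : i ∉ T) :
    a i ≤ (∑ j ∈ T, a j) / #T := by
  rw [le_div_iff₀ (by exact_mod_cast hne.card_pos), mul_comm, ← nsmul_eq_mul, ← sum_const]
  exact sum_le_sum fun j hj => hT i hi j hj

variable [Fintype ι] [DecidableEq ι]

theorem exists_card_eq_forall_le (f : ι → ℝ) {r : ℕ} (hr : r ≤ Fintype.card ι) :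
    ∃ T : Finset ι, #T = r ∧ ∀ i ∉ T, ∀ j ∈ T, f i ≤ f j := by
  obtain ⟨T, hT, hmax⟩ := exists_max_image (powersetCard r univ) (fun T => ∑ i ∈ T, f i)
    (powersetCard_nonempty.2 (by simpa using hr))
  have hTr : #T = r := (mem_powersetCard.1 hT).2
  refine ⟨T, hTr, fun i hi j hj => ?_⟩
  have hi' : i ∉ T.erase j := fun h => hi (mem_of_mem_erase h)
  have hswap := hmax (insert i (T.erase j)) <| mem_powersetCard.2
    ⟨subset_univ _, by
      rw [card_insert_of_notMem hi', card_erase_of_mem hj]; have := card_pos.2 ⟨j, hj⟩; omega⟩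
  rw [sum_insert hi', ← sum_erase_add T f hj] at hswap
  linarith

theorem sum_mul_le_mul_sum_of_forall_le {a t : ι → ℝ} {T : Finset ι} {α : ℝ}
    (ha : ∀ i, 0 ≤ a i) (hT : ∀ i ∉ T, ∀ j ∈ T, a i ≤ a j)
    (ht : ∀ i, 0 ≤ t i ∧ t i ≤ α) (hsum : ∑ i, t i ≤ #T * α) :
    ∑ i, a i * t i ≤ α * ∑ j ∈ T, a j := by
  obtain ⟨m, hm0, hmTc, hmT⟩ : ∃ m, 0 ≤ m ∧ (∀ i ∉ T, a i ≤ m) ∧ ∀ j ∈ T, m ≤ a j := by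
    rcases T.eq_empty_or_nonempty with rfl | hne
    · exact ⟨∑ i, a i, sum_nonneg fun i _ => ha i,
        fun i _ => single_le_sum (fun i _ => ha i) (mem_univ i), by simp⟩
    · exact ⟨T.inf' hne a, (le_inf'_iff hne a).2 fun j _ => ha j,
        fun i hi => (le_inf'_iff hne a).2 (hT i hi), fun j hj => inf'_le a hj⟩
  have hslack : ∑ i ∈ Tᶜ, t i ≤ ∑ j ∈ T, (α - t j) := by
    rw [sum_sub_distrib, sum_const, nsmul_eq_mul]
    rw [← sum_add_sum_compl T t] at hsum
    linarith
  calc ∑ i, a i * t i = ∑ j ∈ T, a j * t j + ∑ i ∈ Tᶜ, a i * t i :=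
        (sum_add_sum_compl T _).symm
    _ ≤ ∑ j ∈ T, a j * t j + m * ∑ j ∈ T, (α - t j) := by
        grw [← hslack, mul_sum]
        gcongr with i hi
        · exact (ht i).1
        · exact hmTc i (mem_compl.1 hi)
    _ ≤ α * ∑ j ∈ T, a j := by
        rw [mul_sum, mul_sum, ← sum_add_distrib]
        gcongr with j hj
        nlinarith [hmT j hj, (ht j).2]

theorem sum_le_sum_of_card_le_of_forall_le {a : ι → ℝ} {S T : Finset ι} (ha : ∀ i, 0 ≤ a i)
    (hT : ∀ i ∉ T, ∀ j ∈ T, a i ≤ a j) (hST : #S ≤ #T) :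
    ∑ i ∈ S, a i ≤ ∑ j ∈ T, a j := by
  have key := sum_mul_le_mul_sum_of_forall_le (t := fun i => if i ∈ S then 1 else 0) (α := 1)
    ha hT (fun i => by split_ifs <;> simp) (by simpa using hST)
  simpa [mul_ite, sum_ite_mem] using key

theorem sum_compl_le_sum_of_card_le_of_forall_le {a : ι → ℝ} {S T : Finset ι}
    (ha : ∀ i, 0 ≤ a i) (hT : ∀ i ∉ T, ∀ j ∈ T, a i ≤ a j) (hST : #S ≤ #T)
    (hS : ∑ i ∈ Sᶜ, a i ≤ ∑ i ∈ S, a i) :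
    ∑ i ∈ Tᶜ, a i ≤ ∑ i ∈ T, a i := by
  have := sum_le_sum_of_card_le_of_forall_le ha hT hST
  have := sum_add_sum_compl S a
  have := sum_add_sum_compl T a
  linarith

end TopSet

section Sparse

variable {m : ℕ}

theorem Sparse.mono {r k : ℕ} {v : Fin m → ℝ} (hv : Sparse r v) (hrk : r ≤ k) : Sparse k v :=
  let ⟨s, hs, hvs⟩ := hv
  ⟨s, hs.trans hrk, hvs⟩

theorem l2_nonneg (v : Fin m → ℝ) : 0 ≤ l2 v := Real.sqrt_nonneg _

theorem l2_sq (v : Fin m → ℝ) : l2 v ^ 2 = v ⬝ᵥ v := by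
  rw [l2, Real.sq_sqrt (sum_nonneg fun i _ => sq_nonneg _), dotProduct]
  simp only [sq]

theorem Sparse.l2_le {r : ℕ} {y : Fin m → ℝ} {α : ℝ} (hy : Sparse r y) (hα : 0 ≤ α)
    (hyα : ∀ i, |y i| ≤ α) : l2 y ≤ Real.sqrt r * α := by
  obtain ⟨s, hsr, hys⟩ := hy
  rw [l2, Real.sqrt_le_iff]
  refine ⟨by positivity, ?_⟩
  calc ∑ i, y i ^ 2 = ∑ i ∈ s, y i ^ 2 :=
        (sum_subset (subset_univ s) fun i _ hi => by simp [hys i hi]).symm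
    _ ≤ ∑ _i ∈ s, α ^ 2 := sum_le_sum fun i _ => by
        simpa using pow_le_pow_left₀ (abs_nonneg _) (hyα i) 2
    _ ≤ r * α ^ 2 := by
        rw [sum_const, nsmul_eq_mul]; gcongr
    _ = (Real.sqrt r * α) ^ 2 := by rw [mul_pow, Real.sq_sqrt (Nat.cast_nonneg r)]

theorem sum_abs_le_sqrt_card_mul_l2 (v : Fin m → ℝ) (T : Finset (Fin m)) :
    ∑ i ∈ T, |v i| ≤ Real.sqrt #T * l2 v := by
  rw [l2, ← Real.sqrt_mul (Nat.cast_nonneg _), Real.le_sqrt (sum_nonneg fun i _ => abs_nonneg _)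
    (by positivity)]
  calc (∑ i ∈ T, |v i|) ^ 2 ≤ #T * ∑ i ∈ T, |v i| ^ 2 := sq_sum_le_card_mul_sum_sq
    _ ≤ #T * ∑ i, v i ^ 2 := by
        simp only [sq_abs]
        gcongr
        exact subset_univ T

theorem exists_sparse_dotProduct_le {r : ℕ} (c x : Fin m → ℝ) {α : ℝ} (hα : 0 ≤ α)
    (hrm : r ≤ m) (hx : ∀ i, |x i| ≤ α) (hx1 : ∑ i, |x i| ≤ r * α) :
    ∃ y, Sparse r y ∧ (∀ i, |y i| ≤ α) ∧ (∀ i, c i = 0 → y i = 0) ∧ c ⬝ᵥ x ≤ c ⬝ᵥ y := by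
  obtain ⟨T, hTr, hT⟩ := exists_card_eq_forall_le (fun i => |c i|) (r := r) (by simpa using hrm)
  refine ⟨fun i => if i ∈ T then α * SignType.sign (c i) else 0, ⟨T, hTr.le, fun i hi => if_neg hi⟩,
    fun i => ?_, fun i hi => by simp [hi], ?_⟩
  · dsimp only
    split_ifs
    · rw [abs_mul, abs_of_nonneg hα]
      refine mul_le_of_le_one_right hα ?_
      rcases SignType.sign (c i) with _ | _ | _ <;> simp
    · simpa using hα
  calc c ⬝ᵥ x ≤ ∑ i, |c i| * |x i| := by
        refine sum_le_sum fun i _ => ?_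
        rw [← abs_mul]
        exact le_abs_self _
    _ ≤ α * ∑ j ∈ T, |c j| := sum_mul_le_mul_sum_of_forall_le (fun i => abs_nonneg _) hT
        (fun i => ⟨abs_nonneg _, hx i⟩) (by rwa [hTr])
    _ = c ⬝ᵥ fun i => if i ∈ T then α * SignType.sign (c i) else 0 := by
        simp only [dotProduct, mul_ite, mul_zero, sum_ite_mem, univ_inter, mul_sum]
        refine sum_congr rfl fun i _ => ?_
        rw [mul_left_comm, self_mul_sign]

theorem sum_compl_abs_sub_le_of_l1_le {β γ : Fin m → ℝ} {S : Finset (Fin m)}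
    (hβ : ∀ i ∉ S, β i = 0) (hγ : l1 γ ≤ l1 β) :
    ∑ i ∈ Sᶜ, |γ i - β i| ≤ ∑ i ∈ S, |γ i - β i| := by
  have hl1β : l1 β = ∑ i ∈ S, |β i| :=
    (sum_subset (subset_univ S) fun i _ hi => by simp [hβ i hi]).symm
  have hl1γ : l1 γ = ∑ i ∈ S, |γ i| + ∑ i ∈ Sᶜ, |γ i - β i| := by
    rw [l1, ← sum_add_sum_compl S]
    congr 1
    exact sum_congr rfl fun i hi => by rw [hβ i (mem_compl.1 hi), sub_zero]
  have hS : ∑ i ∈ S, |β i| ≤ ∑ i ∈ S, |γ i| + ∑ i ∈ S, |γ i - β i| := by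
    rw [← sum_add_distrib]
    refine sum_le_sum fun i _ => ?_
    have := abs_sub_abs_le_abs_sub (β i) (γ i)
    rw [abs_sub_comm] at this
    linarith
  linarith

end Sparse

section RestrictedIsometry

variable {n p k : ℕ} (Φ : Matrix (Fin n) (Fin p) ℝ) {θ : ℝ}

theorem neg_dotProduct_mulVec_le_of_restrictedOrthogonality (hθ0 : 0 ≤ θ)
    (hθ : ∀ c c' : Fin p → ℝ, Sparse k c → Sparse k c' → (∀ i, c i = 0 ∨ c' i = 0) →
      |Φ *ᵥ c ⬝ᵥ Φ *ᵥ c'| ≤ θ * l2 c * l2 c')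
    {T : Finset (Fin p)} (hTk : #T ≤ k) {u v : Fin p → ℝ} (hu : ∀ i ∉ T, u i = 0)
    (hv : ∀ i ∈ T, v i = 0) {α : ℝ} (hα : 0 ≤ α) (hvα : ∀ i, |v i| ≤ α)
    (hv1 : ∑ i, |v i| ≤ #T * α) :
    -(Φ *ᵥ v ⬝ᵥ Φ *ᵥ u) ≤ θ * l2 u * (Real.sqrt #T * α) := by
  -- Masking on `T` makes the sparse vector produced below vanish on `T`.
  set c : Fin p → ℝ := fun i => if i ∈ T then 0 else ((Φ *ᵥ u) ᵥ* Φ) i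
  have hc : ∀ x : Fin p → ℝ, (∀ i ∈ T, x i = 0) → c ⬝ᵥ x = Φ *ᵥ x ⬝ᵥ Φ *ᵥ u := by
    intro x hx
    rw [dotProduct_comm (Φ *ᵥ x), dotProduct_mulVec]
    refine sum_congr rfl fun i _ => ?_
    by_cases hi : i ∈ T <;> simp [c, hi, hx]
  obtain ⟨y, hyr, hyα, hyc, hcy⟩ := exists_sparse_dotProduct_le c (-v) hα
    ((card_le_univ T).trans_eq (Fintype.card_fin p)) (by simpa using hvα) (by simpa using hv1)
  have hyT : ∀ i ∈ T, y i = 0 := fun i hi => hyc i (if_pos hi)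
  have hdisj : ∀ i, u i = 0 ∨ y i = 0 := fun i => by
    by_cases hi : i ∈ T
    · exact .inr (hyT i hi)
    · exact .inl (hu i hi)
  calc -(Φ *ᵥ v ⬝ᵥ Φ *ᵥ u) = c ⬝ᵥ -v := by
        rw [hc _ fun i hi => by simp [hv i hi], mulVec_neg, neg_dotProduct]
    _ ≤ c ⬝ᵥ y := hcy
    _ = Φ *ᵥ u ⬝ᵥ Φ *ᵥ y := by rw [hc y hyT, dotProduct_comm]
    _ ≤ θ * l2 u * l2 y := (le_abs_self _).trans (hθ u y ⟨T, hTk, hu⟩ (hyr.mono hTk) hdisj)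
    _ ≤ θ * l2 u * (Real.sqrt #T * α) := by
        gcongr
        · exact mul_nonneg hθ0 (Real.sqrt_nonneg _)
        · exact hyr.l2_le hα hyα

theorem sum_abs_eq_zero_of_mulVec_eq_zero {δ : ℝ} (hθ0 : 0 ≤ θ)
    (hδ : ∀ c : Fin p → ℝ, Sparse k c → Real.sqrt (1 - δ) * l2 c ≤ l2 (Φ *ᵥ c))
    (hθ : ∀ c c' : Fin p → ℝ, Sparse k c → Sparse k c' → (∀ i, c i = 0 ∨ c' i = 0) →
      |Φ *ᵥ c ⬝ᵥ Φ *ᵥ c'| ≤ θ * l2 c * l2 c')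
    (hcond : δ + θ < 1) {h : Fin p → ℝ} (hΦh : Φ *ᵥ h = 0) {T : Finset (Fin p)} (hTk : #T ≤ k)
    (hne : T.Nonempty) (hT : ∀ i ∉ T, ∀ j ∈ T, |h i| ≤ |h j|)
    (hTc : ∑ i ∈ Tᶜ, |h i| ≤ ∑ i ∈ T, |h i|) :
    ∑ i ∈ T, |h i| = 0 := by
  set A := ∑ i ∈ T, |h i|
  set u : Fin p → ℝ := fun i => if i ∈ T then h i else 0
  have huT : ∀ i ∉ T, u i = 0 := fun i hi => if_neg hi
  have hr : (0 : ℝ) < #T := by exact_mod_cast hne.card_pos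
  have hA : A ≤ Real.sqrt #T * l2 u :=
    calc A = ∑ i ∈ T, |u i| := sum_congr rfl fun i hi => by simp [u, hi]
      _ ≤ Real.sqrt #T * l2 u := sum_abs_le_sqrt_card_mul_l2 u T
  have hv : ∀ i, |(h - u) i| ≤ A / #T := fun i => by
    by_cases hi : i ∈ T
    · simpa [u, hi] using div_nonneg (sum_nonneg fun j _ => abs_nonneg (h j)) hr.le
    · simpa [u, hi] using le_sum_div_card_of_forall_le hT hne hi
  have hv1 : ∑ i, |(h - u) i| ≤ #T * (A / #T) := by
    rw [mul_div_cancel₀ _ hr.ne', ← sum_add_sum_compl T, sum_eq_zero fun i hi => by simp [u, hi],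
      zero_add]
    exact (sum_congr rfl fun i hi => by simp [u, mem_compl.1 hi]).trans_le hTc
  have hcross := neg_dotProduct_mulVec_le_of_restrictedOrthogonality Φ hθ0 hθ hTk
    huT (fun i hi => by simp [u, hi]) (by positivity) hv hv1
  have hαu : Real.sqrt #T * (A / #T) ≤ l2 u := by
    rw [← mul_div_assoc, div_le_iff₀ hr]
    calc Real.sqrt #T * A ≤ Real.sqrt #T * (Real.sqrt #T * l2 u) := by gcongr
      _ = l2 u * #T := by rw [← mul_assoc, Real.mul_self_sqrt hr.le, mul_comm]
  have hrip : (1 - δ) * l2 u ^ 2 ≤ Φ *ᵥ u ⬝ᵥ Φ *ᵥ u := by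
    rw [← l2_sq, ← Real.sq_sqrt (by linarith : 0 ≤ 1 - δ), ← mul_pow]
    exact pow_le_pow_left₀ (mul_nonneg (Real.sqrt_nonneg _) (l2_nonneg u)) (hδ u ⟨T, hTk, huT⟩) 2
  have hΦu : Φ *ᵥ u ⬝ᵥ Φ *ᵥ u = -(Φ *ᵥ (h - u) ⬝ᵥ Φ *ᵥ u) := by
    rw [mulVec_sub, hΦh, zero_sub, neg_dotProduct, neg_neg]
  have hu : l2 u = 0 := by
    have hsq : (1 - δ - θ) * l2 u ^ 2 ≤ 0 := by
      nlinarith [mul_le_mul_of_nonneg_left hαu (mul_nonneg hθ0 (l2_nonneg u))]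
    exact pow_eq_zero_iff two_ne_zero |>.1 <|
      le_antisymm (nonpos_of_mul_nonpos_right hsq (by linarith)) (sq_nonneg _)
  exact le_antisymm (by simpa [hu] using hA) (sum_nonneg fun i _ => abs_nonneg _)

theorem eq_zero_of_mulVec_eq_zero_of_sum_compl_le {δ : ℝ} (hθ0 : 0 ≤ θ)
    (hδ : ∀ c : Fin p → ℝ, Sparse k c → Real.sqrt (1 - δ) * l2 c ≤ l2 (Φ *ᵥ c))
    (hθ : ∀ c c' : Fin p → ℝ, Sparse k c → Sparse k c' → (∀ i, c i = 0 ∨ c' i = 0) →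
      |Φ *ᵥ c ⬝ᵥ Φ *ᵥ c'| ≤ θ * l2 c * l2 c')
    (hcond : δ + θ < 1) {h : Fin p → ℝ} (hΦh : Φ *ᵥ h = 0) {S : Finset (Fin p)} (hSk : #S ≤ k)
    (hS : ∑ i ∈ Sᶜ, |h i| ≤ ∑ i ∈ S, |h i|) :
    h = 0 := by
  obtain ⟨T, hTcard, hT⟩ := exists_card_eq_forall_le (fun i => |h i|) (r := min k p) (by simp)
  have hTc : ∑ i ∈ Tᶜ, |h i| ≤ ∑ i ∈ T, |h i| :=
    sum_compl_le_sum_of_card_le_of_forall_le (fun i => abs_nonneg (h i)) hT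
      (hTcard ▸ le_min hSk ((card_le_univ S).trans_eq (Fintype.card_fin p))) hS
  have hT0 : ∑ i ∈ T, |h i| = 0 := by
    rcases T.eq_empty_or_nonempty with rfl | hne
    · exact sum_empty
    · exact sum_abs_eq_zero_of_mulVec_eq_zero Φ hθ0 hδ hθ hcond hΦh
        (hTcard ▸ min_le_left k p) hne hT hTc
  have hl1 : ∑ i, |h i| ≤ 0 := by
    rw [← sum_add_sum_compl T]
    linarith
  funext i
  exact abs_nonpos_iff.1 ((single_le_sum (fun j _ => abs_nonneg (h j)) (mem_univ i)).trans hl1)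

end RestrictedIsometry

theorem exact_sparse_recovery_general
    {n p k : ℕ} (Φ : Matrix (Fin n) (Fin p) ℝ) (δ θ : ℝ)
    (hθ0 : 0 ≤ θ)
    (hδ : ∀ c : Fin p → ℝ, Sparse k c →
      Real.sqrt (1 - δ) * l2 c ≤ l2 (Φ.mulVec c) ∧
      l2 (Φ.mulVec c) ≤ Real.sqrt (1 + δ) * l2 c)
    (hθ : ∀ c c' : Fin p → ℝ, Sparse k c → Sparse k c' → (∀ i, c i = 0 ∨ c' i = 0) →
      |dotProduct (Φ.mulVec c) (Φ.mulVec c')| ≤ θ * l2 c * l2 c')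
    (hcond : δ + θ < 1)
    (β : Fin p → ℝ) (hβ : Sparse k β)
    (βhat : Fin p → ℝ) (hfeas : Φ.mulVec βhat = Φ.mulVec β)
    (hmin : ∀ γ : Fin p → ℝ, Φ.mulVec γ = Φ.mulVec β → l1 βhat ≤ l1 γ) :
    βhat = β := by
  obtain ⟨S, hSk, hβS⟩ := hβ
  have hΦh : Φ *ᵥ (βhat - β) = 0 := by rw [mulVec_sub, hfeas, sub_self]
  have hcone := sum_compl_abs_sub_le_of_l1_le hβS (hmin β rfl)
  exact sub_eq_zero.1 <| eq_zero_of_mulVec_eq_zero_of_sum_compl_le Φ hθ0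
    (fun c hc => (hδ c hc).1) hθ hcond hΦh hSk hcone

/-- Exact recovery of `k`-sparse signals by ℓ₁ minimization under
`δ_k + θ_{k,k} < 1`. -/
theorem exact_sparse_recovery
    {n p k : ℕ} (Φ : Matrix (Fin n) (Fin p) ℝ) (δ θ : ℝ)
    (hδ0 : 0 ≤ δ) (hθ0 : 0 ≤ θ)
    (hδ : ∀ c : Fin p → ℝ, Sparse k c →
      Real.sqrt (1 - δ) * l2 c ≤ l2 (Φ.mulVec c) ∧
      l2 (Φ.mulVec c) ≤ Real.sqrt (1 + δ) * l2 c)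
    (hθ : ∀ c c' : Fin p → ℝ, Sparse k c → Sparse k c' → (∀ i, c i = 0 ∨ c' i = 0) →
      |dotProduct (Φ.mulVec c) (Φ.mulVec c')| ≤ θ * l2 c * l2 c')
    (hcond : δ + θ < 1)
    (β : Fin p → ℝ) (hβ : Sparse k β)
    (βhat : Fin p → ℝ) (hfeas : Φ.mulVec βhat = Φ.mulVec β)
    (hmin : ∀ γ : Fin p → ℝ, Φ.mulVec γ = Φ.mulVec β → l1 βhat ≤ l1 γ) :
    βhat = β :=
  exact_sparse_recovery_general Φ δ θ hθ0 hδ hθ hcond β hβ βhat hfeas hmin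
end

section
/- Every vector v ∈ ℝⁿ with ‖v‖₁ ≤ C and ‖v‖_∞ ≤ C/k (k ≤ n positive integers, C > 0) can be written as a convex combination of k-sparse vectors each with ℓ₂ norm at most C/√k. -/
open Finset

theorem sum_eq_card_filter_eq_one {ι : Type*} {s : Finset ι} {w : ι → ℝ}
    (hw : ∀ i ∈ s, w i = 0 ∨ w i = 1) : ∑ i ∈ s, w i = #{i ∈ s | w i = 1} := by
  rw [natCast_card_filter]
  exact sum_congr rfl fun i hi => by rcases hw i hi with h | h <;> simp [h]

section CappedSimplex

variable {ι : Type*} [Fintype ι]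

def cappedSimplex (ι : Type*) [Fintype ι] (k : ℕ) : Set (ι → ℝ) :=
  Set.Icc 0 1 ∩ {u | ∑ i, u i ≤ k}

def cappedSimplexVertices (ι : Type*) [Fintype ι] (k : ℕ) : Set (ι → ℝ) :=
  {u ∈ cappedSimplex ι k | ∀ i, u i = 0 ∨ u i = 1}

theorem convex_cappedSimplex (k : ℕ) : Convex ℝ (cappedSimplex ι k) :=
  (convex_Icc 0 1).inter <|
    convex_halfSpace_le ⟨fun _ _ => sum_add_distrib, fun _ _ => (mul_sum _ _ _).symm⟩ _

theorem isCompact_cappedSimplex (k : ℕ) : IsCompact (cappedSimplex ι k) :=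
  isCompact_Icc.inter_right <|
    isClosed_le (continuous_finsetSum _ fun i _ => continuous_apply i) continuous_const

theorem add_mem_cappedSimplex {k : ℕ} {u d : ι → ℝ}
    (hd : ∀ i, |d i| ≤ min (u i) (1 - u i)) (hsum : |∑ i, d i| ≤ k - ∑ i, u i) :
    u + d ∈ cappedSimplex ι k := by
  refine ⟨⟨fun i => ?_, fun i => ?_⟩, ?_⟩
  · have := (abs_le.1 ((hd i).trans (min_le_left _ _))).1
    simp only [Pi.zero_apply, Pi.add_apply]
    linarith
  · have := (abs_le.1 ((hd i).trans (min_le_right _ _))).2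
    simp only [Pi.one_apply, Pi.add_apply]
    linarith
  · have := (abs_le.1 hsum).2
    simp only [Set.mem_ofPred_eq, Pi.add_apply, sum_add_distrib]
    linarith

theorem mem_Ioo_of_mem_cappedSimplex {k : ℕ} {u : ι → ℝ} (hu : u ∈ cappedSimplex ι k) {i : ι}
    (hi : ¬(u i = 0 ∨ u i = 1)) : u i ∈ Set.Ioo 0 1 := by
  push Not at hi
  exact ⟨(hu.1.1 i).lt_of_ne' hi.1, (hu.1.2 i).lt_of_ne hi.2⟩

theorem sum_lt_of_forall_ne_eq_zero_or_eq_one {k : ℕ} {u : ι → ℝ} (hu : u ∈ cappedSimplex ι k)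
    {i : ι} (hi : u i ∈ Set.Ioo 0 1) (hint : ∀ j ≠ i, u j = 0 ∨ u j = 1) :
    ∑ j, u j < k := by
  classical
  set m := #{j ∈ univ.erase i | u j = 1}
  have hsum : ∑ j, u j = u i + m := by
    rw [← add_sum_erase _ _ (mem_univ i),
      sum_eq_card_filter_eq_one fun j hj => hint j (ne_of_mem_erase hj)]
  have hmk : m < k := by
    have hle : ∑ j, u j ≤ k := hu.2
    have : (m : ℝ) < k := by linarith [hi.1]
    exact_mod_cast this
  have : (m : ℝ) + 1 ≤ k := by exact_mod_cast hmk
  linarith [hi.2]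

theorem exists_perturbation_of_mem_cappedSimplex {k : ℕ} {u : ι → ℝ}
    (hu : u ∈ cappedSimplex ι k) {i : ι} (hi : ¬(u i = 0 ∨ u i = 1)) :
    ∃ d : ι → ℝ, d ≠ 0 ∧ (∀ l, |d l| ≤ min (u l) (1 - u l)) ∧ |∑ l, d l| ≤ k - ∑ l, u l := by
  classical
  have hslack : 0 ≤ (k : ℝ) - ∑ l, u l := sub_nonneg.2 hu.2
  have hmin : ∀ l, 0 ≤ min (u l) (1 - u l) := fun l =>
    le_min (hu.1.1 l) (sub_nonneg.2 (hu.1.2 l))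
  have hui := mem_Ioo_of_mem_cappedSimplex hu hi
  by_cases htwo : ∃ j ≠ i, ¬(u j = 0 ∨ u j = 1)
  · obtain ⟨j, hji, hj⟩ := htwo
    have huj := mem_Ioo_of_mem_cappedSimplex hu hj
    set ε := min (min (u i) (1 - u i)) (min (u j) (1 - u j))
    have hε : 0 < ε := by
      simp only [ε, lt_min_iff, sub_pos]
      exact ⟨⟨hui.1, hui.2⟩, huj.1, huj.2⟩
    refine ⟨Pi.single i ε - Pi.single j ε, fun h => ?_, fun l => ?_, ?_⟩
    · have := congrFun h i
      simp [hji.symm, hε.ne'] at this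
    · by_cases hli : l = i
      · subst hli; simp [hji.symm, abs_of_pos hε, ε]
      by_cases hlj : l = j
      · subst hlj; simp [hji, abs_of_pos hε, ε]
      · simp [hli, hlj, hmin l]
    · simpa [sum_sub_distrib] using hslack
  · push Not at htwo
    have hlt := sum_lt_of_forall_ne_eq_zero_or_eq_one hu hui htwo
    set ε := min (min (u i) (1 - u i)) ((k : ℝ) - ∑ l, u l)
    have hε : 0 < ε := by
      simp only [ε, lt_min_iff, sub_pos]
      exact ⟨⟨hui.1, hui.2⟩, hlt⟩
    refine ⟨Pi.single i ε, fun h => ?_, fun l => ?_, ?_⟩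
    · have := congrFun h i
      simp [hε.ne'] at this
    · by_cases hli : l = i
      · subst hli; simp [abs_of_pos hε, ε]
      · simp [hli, hmin l]
    · simp [abs_of_pos hε, ε]

theorem notMem_extremePoints_of_add_mem_of_sub_mem {E : Type*} [AddCommGroup E] [Module ℝ E]
    {A : Set E} {x d : E} (hd : d ≠ 0) (hadd : x + d ∈ A) (hsub : x - d ∈ A) :
    x ∉ A.extremePoints ℝ := fun hx =>
  hd <| by simpa using hx.2 hsub hadd (mem_openSegment_sub_add x d)

theorem extremePoints_cappedSimplex_subset (k : ℕ) :
    (cappedSimplex ι k).extremePoints ℝ ⊆ cappedSimplexVertices ι k := by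
  refine fun u hu => ⟨hu.1, fun i => ?_⟩
  by_contra hi
  obtain ⟨d, hd0, hd, hsum⟩ := exists_perturbation_of_mem_cappedSimplex hu.1 hi
  refine notMem_extremePoints_of_add_mem_of_sub_mem hd0 (add_mem_cappedSimplex hd hsum) ?_ hu
  rw [sub_eq_add_neg]
  exact add_mem_cappedSimplex (fun l => by simpa using hd l) (by simpa using hsum)

theorem finite_cappedSimplexVertices (k : ℕ) : (cappedSimplexVertices ι k).Finite :=
  (Set.Finite.pi (t := fun _ => {0, 1}) fun _ => Set.toFinite _).subset
    fun _ hu => Set.mem_univ_pi.2 hu.2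

theorem convexHull_cappedSimplexVertices (k : ℕ) :
    convexHull ℝ (cappedSimplexVertices ι k) = cappedSimplex ι k := by
  refine (convexHull_min (Set.sep_subset _ _) (convex_cappedSimplex k)).antisymm ?_
  calc cappedSimplex ι k
      = closure (convexHull ℝ ((cappedSimplex ι k).extremePoints ℝ)) :=
        (closure_convexHull_extremePoints (isCompact_cappedSimplex k) (convex_cappedSimplex k)).symm
    _ ⊆ closure (convexHull ℝ (cappedSimplexVertices ι k)) :=
        closure_mono (convexHull_mono (extremePoints_cappedSimplex_subset k))
    _ = convexHull ℝ (cappedSimplexVertices ι k) :=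
        (finite_cappedSimplexVertices k).isClosed_convexHull ℝ |>.closure_eq

end CappedSimplex

theorem abs_sign_le_one (x : ℝ) : |(SignType.sign x : ℝ)| ≤ 1 := by
  rcases lt_trichotomy x 0 with h | h | h <;> simp [h]

theorem abs_div_mem_cappedSimplex {m k : ℕ} {v : Fin m → ℝ} {b : ℝ} (hb : 0 < b)
    (hv1 : l1 v ≤ k * b) (hvinf : ∀ i, |v i| ≤ b) :
    (fun i => |v i| / b) ∈ cappedSimplex (Fin m) k := by
  refine ⟨⟨fun i => by positivity, fun i => (div_le_one hb).2 (hvinf i)⟩, ?_⟩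
  show ∑ i, |v i| / b ≤ k
  rw [← sum_div, div_le_iff₀ hb]
  exact hv1

theorem sparse_mul_of_mem_cappedSimplexVertices {m k : ℕ} (c : Fin m → ℝ) {w : Fin m → ℝ}
    (hw : w ∈ cappedSimplexVertices (Fin m) k) : Sparse k (c * w) := by
  classical
  refine ⟨({i | w i = 1} : Finset _), ?_, fun i hi => ?_⟩
  · have hsum : ∑ i, w i ≤ k := hw.1.2
    rw [sum_eq_card_filter_eq_one fun i _ => hw.2 i] at hsum
    exact_mod_cast hsum
  · have : w i = 0 := (hw.2 i).resolve_right (by simpa using hi)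
    simp [this]

theorem l2_mul_le_of_mem_cappedSimplexVertices {m k : ℕ} {c : Fin m → ℝ} {b : ℝ} (hb : 0 ≤ b)
    (hc : ∀ i, |c i| ≤ b) {w : Fin m → ℝ} (hw : w ∈ cappedSimplexVertices (Fin m) k) :
    l2 (c * w) ≤ b * √k := by
  have hterm : ∀ i, (c i * w i) ^ 2 ≤ b ^ 2 * w i := fun i => by
    rcases hw.2 i with h | h
    · simp [h]
    · simpa [h] using sq_le_sq' (abs_le.1 (hc i)).1 (abs_le.1 (hc i)).2
  calc l2 (c * w) ≤ √(b ^ 2 * k) := by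
        refine Real.sqrt_le_sqrt ((sum_le_sum fun i _ => hterm i).trans ?_)
        rw [← mul_sum]
        exact mul_le_mul_of_nonneg_left hw.1.2 (sq_nonneg b)
    _ = b * √k := by rw [Real.sqrt_mul (sq_nonneg b), Real.sqrt_sq hb]

theorem exists_fin_sum_eq_of_mem_convexHull {R E : Type*} [Field R] [LinearOrder R]
    [IsStrictOrderedRing R] [AddCommGroup E] [Module R E] {s : Set E} {x : E}
    (hx : x ∈ convexHull R s) :
    ∃ (M : ℕ) (w : Fin M → E) (a : Fin M → R),
      (∀ t, 0 ≤ a t) ∧ ∑ t, a t = 1 ∧ x = ∑ t, a t • w t ∧ ∀ t, w t ∈ s := by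
  obtain ⟨ι, _, a, z, ha0, ha1, hz, rfl⟩ := mem_convexHull_iff_exists_fintype.1 hx
  let e := (Fintype.equivFin ι).symm
  exact ⟨Fintype.card ι, z ∘ e, a ∘ e, fun t => ha0 (e t), (e.sum_comp a).trans ha1,
    (e.sum_comp fun i => a i • z i).symm, fun t => hz (e t)⟩

theorem convex_combination_l2_bound_general
    {n k : ℕ} (hk : 0 < k) {C : ℝ} (hC : 0 < C)
    (v : Fin n → ℝ) (hv1 : l1 v ≤ C) (hvinf : ∀ i, |v i| ≤ C / k) :
    ∃ (M : ℕ) (w : Fin M → Fin n → ℝ) (x : Fin M → ℝ),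
      (∀ t, 0 ≤ x t) ∧ (∑ t, x t) = 1 ∧
      (v = ∑ t, x t • w t) ∧
      (∀ t, Sparse k (w t) ∧ l2 (w t) ≤ C / Real.sqrt k) := by
  set b := C / k
  have hb : 0 < b := by positivity
  have hkb : k * b = C := by simp only [b]; field_simp
  have hbk : b * √k = C / √k := by
    rw [← hkb, eq_div_iff (by positivity), mul_assoc, Real.mul_self_sqrt (by positivity), mul_comm]
  set c : Fin n → ℝ := fun i => b * SignType.sign (v i)
  have hc : ∀ i, |c i| ≤ b := fun i => by
    rw [abs_mul, abs_of_pos hb]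
    exact mul_le_of_le_one_right hb.le (abs_sign_le_one (v i))
  have hv : v = LinearMap.mulLeft ℝ c fun i => |v i| / b := funext fun i => by
    show v i = b * SignType.sign (v i) * (|v i| / b)
    rw [mul_comm b, mul_assoc, mul_div_cancel₀ _ hb.ne', sign_mul_abs]
  have hu := abs_div_mem_cappedSimplex hb (hkb ▸ hv1) hvinf
  rw [← convexHull_cappedSimplexVertices] at hu
  have hmem := Set.mem_image_of_mem (LinearMap.mulLeft ℝ c) hu
  rw [LinearMap.image_convexHull, ← hv] at hmem
  refine exists_fin_sum_eq_of_mem_convexHull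
    (convexHull_mono (t := {w | Sparse k w ∧ l2 w ≤ C / √k}) ?_ hmem)
  rintro _ ⟨w, hw, rfl⟩
  exact ⟨sparse_mul_of_mem_cappedSimplexVertices c hw,
    hbk ▸ l2_mul_le_of_mem_cappedSimplexVertices hb.le hc hw⟩

/-- Every vector with `‖v‖₁ ≤ C` and `‖v‖_∞ ≤ C/k` is a convex combination of
`k`-sparse vectors each with ℓ₂ norm at most `C/√k`. -/
theorem convex_combination_l2_bound
    {n k : ℕ} (hk : 0 < k) (hkn : k ≤ n) {C : ℝ} (hC : 0 < C)
    (v : Fin n → ℝ) (hv1 : l1 v ≤ C) (hvinf : ∀ i, |v i| ≤ C / k) :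
    ∃ (M : ℕ) (w : Fin M → Fin n → ℝ) (x : Fin M → ℝ),
      (∀ t, 0 ≤ x t) ∧ (∑ t, x t) = 1 ∧
      (v = ∑ t, x t • w t) ∧
      (∀ t, Sparse k (w t) ∧ l2 (w t) ≤ C / Real.sqrt k) :=
  convex_combination_l2_bound_general hk hC v hv1 hvinf
end

section
/- Let v ∈ ℝⁿ with all components positive and sorted decreasingly, n > k ≥ 1, ‖v‖₁ ≤ C and v(1) ≤ C/k. Then v can be written as a convex combination of at most k+1 vectors, each having at most n−1 nonzero components, each with ℓ₁ norm equal to ‖v‖₁ and ℓ∞ norm at most C/k. -/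
open Finset

/-! Let `d = v (n - 1)` be the smallest entry and `c = C / k`. Since `‖v‖₁ ≤ k c`, the head
`v 0, …, v (k - 1)` has room `∑ j < k, (c - v j) ≥ d` below the cap, so moving `d` onto the head
gives a vector `g` with `g (n - 1) = 0` and entries in `[0, c]`. Swapping coordinates `j` and
`n - 1` of `g` gives `k` more such vectors, and
`v = (1 - ∑ λⱼ) g + ∑ λⱼ (g ∘ swap j (n - 1))` with `λⱼ = (g j - v j) / g j`. These weights sum
to at most `1` because `g j ≥ v j ≥ d` and `∑ (g j - v j) = d`: this is where sortedness enters. -/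

theorem swap_combination_apply (g x : ℕ → ℝ) {p : ℕ} (hp : g p = 0) (J : Finset ℕ) (i : ℕ) :
    (1 - ∑ j ∈ J, x j) * g i + ∑ j ∈ J, x j * g (Equiv.swap j p i) =
      if i = p then ∑ j ∈ J, x j * g j else if i ∈ J then (1 - x i) * g i else g i := by
  split_ifs with hip hiJ
  · subst hip
    simp [hp]
  · have hfix : ∀ j ∈ J.erase i, Equiv.swap j p i = i := fun j hj =>
      Equiv.swap_apply_of_ne_of_ne (ne_of_mem_erase hj).symm hip
    have hrest : ∑ j ∈ J.erase i, x j * g (Equiv.swap j p i) = (∑ j ∈ J.erase i, x j) * g i := by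
      rw [sum_mul]
      exact sum_congr rfl fun j hj => by rw [hfix j hj]
    rw [← add_sum_erase J x hiJ, ← add_sum_erase J _ hiJ, hrest, Equiv.swap_apply_left, hp]
    ring
  · have hfix : ∀ j ∈ J, Equiv.swap j p i = i := fun j hj =>
      Equiv.swap_apply_of_ne_of_ne (fun h => hiJ (h ▸ hj)) hip
    have hall : ∑ j ∈ J, x j * g (Equiv.swap j p i) = (∑ j ∈ J, x j) * g i := by
      rw [sum_mul]
      exact sum_congr rfl fun j hj => by rw [hfix j hj]
    rw [hall]
    ring

theorem swap_apply_lt {a b n i : ℕ} (ha : a < n) (hb : b < n) (hi : i < n) :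
    Equiv.swap a b i < n := by
  rw [Equiv.swap_apply_def]
  split_ifs <;> assumption

theorem sum_range_comp_swap {M : Type*} [AddCommMonoid M] (f : ℕ → M) {a b n : ℕ}
    (ha : a < n) (hb : b < n) :
    ∑ i ∈ range n, f (Equiv.swap a b i) = ∑ i ∈ range n, f i :=
  Equiv.Perm.sum_comp _ _ _ fun i hi => by
    by_contra hin
    exact hi (Equiv.swap_apply_of_ne_of_ne (by simp_all; omega) (by simp_all; omega))

theorem exists_card_le_pred_of_eq_zero {M : Type*} [Zero M] {n i₀ : ℕ} {w : ℕ → M}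
    (hi₀ : i₀ < n) (hw : w i₀ = 0) :
    ∃ s : Finset ℕ, s.card ≤ n - 1 ∧ ∀ i < n, i ∉ s → w i = 0 := by
  refine ⟨(range n).erase i₀, by simp [card_erase_of_mem, hi₀], fun i hi his => ?_⟩
  obtain rfl : i = i₀ := by
    by_contra h
    exact his (mem_erase.2 ⟨h, mem_range.2 hi⟩)
  exact hw

structure IsRedistributionOfLast (n k : ℕ) (v g : ℕ → ℝ) : Prop where
  last_eq_zero : g (n - 1) = 0
  le_head : ∀ j < k, v j ≤ g j
  sum_head : ∑ j ∈ range k, (g j - v j) = v (n - 1)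
  eq_tail : ∀ i, k ≤ i → i ≠ n - 1 → g i = v i

namespace IsRedistributionOfLast

variable {n k : ℕ} {v g : ℕ → ℝ}

theorem sum_range_eq (h : IsRedistributionOfLast n k v g) (hkn : k < n) :
    ∑ i ∈ range n, g i = ∑ i ∈ range n, v i := by
  have htail : ∑ i ∈ Ico k n, (g i - v i) = g (n - 1) - v (n - 1) :=
    sum_eq_single_of_mem (n - 1) (mem_Ico.2 ⟨by omega, by omega⟩) fun i hi hip => by
      rw [h.eq_tail i (mem_Ico.1 hi).1 hip, sub_self]
  rw [← sub_eq_zero, ← sum_sub_distrib, ← sum_range_add_sum_Ico _ hkn.le, h.sum_head, htail,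
    h.last_eq_zero]
  ring

theorem eq_swap_combination (h : IsRedistributionOfLast n k v g) (hg : ∀ j < k, g j ≠ 0)
    (i : ℕ) :
    v i = (1 - ∑ j ∈ range k, (g j - v j) / g j) * g i +
      ∑ j ∈ range k, (g j - v j) / g j * g (Equiv.swap j (n - 1) i) := by
  rw [swap_combination_apply _ _ h.last_eq_zero]
  split_ifs with hip hik
  · rw [hip, ← h.sum_head]
    exact sum_congr rfl fun j hj => (div_mul_cancel₀ _ (hg j (mem_range.1 hj))).symm
  · field_simp [hg i (mem_range.1 hik)]
    ring
  · exact (h.eq_tail i (by simpa using hik) hip).symm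

theorem sum_weights_le_one (h : IsRedistributionOfLast n k v g) (hlast : 0 < v (n - 1))
    (hhead : ∀ j < k, v (n - 1) ≤ v j) :
    ∑ j ∈ range k, (g j - v j) / g j ≤ 1 :=
  calc ∑ j ∈ range k, (g j - v j) / g j
      ≤ ∑ j ∈ range k, (g j - v j) / v (n - 1) := sum_le_sum fun j hj => by
        have hj := mem_range.1 hj
        exact div_le_div_of_nonneg_left (sub_nonneg.2 (h.le_head j hj)) hlast
          ((hhead j hj).trans (h.le_head j hj))
    _ = 1 := by rw [← sum_div, h.sum_head, div_self hlast.ne']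

end IsRedistributionOfLast

theorem exists_isRedistributionOfLast {n k : ℕ} (hkn : k < n) {c : ℝ} {v : ℕ → ℝ}
    (hv : ∀ i < n, 0 ≤ v i ∧ v i ≤ c) (hsum : ∑ i ∈ range n, v i ≤ k * c) :
    ∃ g, IsRedistributionOfLast n k v g ∧ ∀ i < n, 0 ≤ g i ∧ g i ≤ c := by
  set H := ∑ j ∈ range k, (c - v j)
  have hlast := hv (n - 1) (by omega)
  have hroom : v (n - 1) ≤ H := by
    have htail : v (n - 1) ≤ ∑ i ∈ Ico k n, v i :=
      single_le_sum (fun i hi => (hv i (mem_Ico.1 hi).2).1) (mem_Ico.2 ⟨by omega, by omega⟩)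
    have hsplit := sum_range_add_sum_Ico v hkn.le
    simp only [H, sum_sub_distrib, sum_const, card_range, nsmul_eq_mul]
    linarith
  set t := v (n - 1) / H
  have ht0 : 0 ≤ t := div_nonneg hlast.1 (hlast.1.trans hroom)
  have ht1 : t ≤ 1 := div_le_one_of_le₀ hroom (hlast.1.trans hroom)
  refine ⟨fun i => if i < k then v i + t * (c - v i) else if i = n - 1 then 0 else v i,
    ⟨by rw [if_neg (by omega), if_pos rfl], fun j hj => ?_, ?_,
      fun i hki hip => by simp [not_lt.2 hki, hip]⟩,
    fun i hi => ?_⟩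
  · have := hv j (by omega)
    simp only [hj, if_true]
    nlinarith
  · rw [sum_congr rfl fun j hj => by rw [if_pos (mem_range.1 hj), add_sub_cancel_left],
      ← mul_sum]
    exact div_mul_cancel_of_imp fun hH => by linarith
  · have := hv i hi
    dsimp only
    split_ifs
    · constructor <;> nlinarith
    · exact ⟨le_rfl, this.1.trans this.2⟩
    · exact this

theorem inductive_step_decomposition_general
    (n k : ℕ) (hk : 0 < k) (hkn : k < n) (C : ℝ)
    (v : ℕ → ℝ)
    (hsort : ∀ i j, i ≤ j → j < n → v j ≤ v i)
    (hpos : ∀ i < n, 0 < v i)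
    (hv1 : ∑ i ∈ Finset.range n, |v i| ≤ C)
    (hmax : v 0 ≤ C / k) :
    ∃ M : ℕ, M ≤ k + 1 ∧
      ∃ (w : Fin M → ℕ → ℝ) (x : Fin M → ℝ),
        (∀ t, 0 ≤ x t) ∧ (∑ t, x t) = 1 ∧
        (∀ i < n, v i = ∑ t, x t * w t i) ∧
        ∀ t, (∃ s : Finset ℕ, s.card ≤ n - 1 ∧ ∀ i < n, i ∉ s → w t i = 0) ∧
          (∑ i ∈ Finset.range n, |w t i| = ∑ i ∈ Finset.range n, |v i|) ∧
          ∀ i < n, |w t i| ≤ C / k := by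
  have hl1 : ∑ i ∈ range n, |v i| = ∑ i ∈ range n, v i :=
    sum_congr rfl fun i hi => abs_of_pos (hpos i (mem_range.1 hi))
  have hv : ∀ i < n, 0 ≤ v i ∧ v i ≤ C / k := fun i hi =>
    ⟨(hpos i hi).le, (hsort 0 i i.zero_le hi).trans hmax⟩
  obtain ⟨g, hg, hgbound⟩ := exists_isRedistributionOfLast hkn hv
    (by rw [mul_div_cancel₀ _ (by positivity)]; linarith)
  have hgpos : ∀ j < k, g j ≠ 0 := fun j hj =>
    ((hpos j (by omega)).trans_le (hg.le_head j hj)).ne'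
  have hgl1 : ∑ i ∈ range n, |g i| = ∑ i ∈ range n, |v i| := by
    rw [hl1, ← hg.sum_range_eq hkn]
    exact sum_congr rfl fun i hi => abs_of_nonneg (hgbound i (mem_range.1 hi)).1
  have hgle : ∀ i < n, |g i| ≤ C / k := fun i hi => by
    rw [abs_of_nonneg (hgbound i hi).1]
    exact (hgbound i hi).2
  set weight := fun j : ℕ => (g j - v j) / g j
  refine ⟨k + 1, le_rfl, Fin.cons g fun (j : Fin k) i => g (Equiv.swap (j : ℕ) (n - 1) i),
    Fin.cons (1 - ∑ j ∈ range k, weight j) fun j => weight j, ?_, ?_, fun i _ => ?_, fun t => ?_⟩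
  · refine Fin.cases ?_ fun j => ?_
    · simpa using
        hg.sum_weights_le_one (hpos _ (by omega)) fun j hj => hsort j _ (by omega) (by omega)
    · exact div_nonneg (sub_nonneg.2 (hg.le_head j j.2)) ((hgbound j (by omega)).1)
  · simp [Fin.sum_cons, Fin.sum_univ_eq_sum_range weight]
  · simp only [Fin.sum_univ_succ, Fin.cons_zero, Fin.cons_succ]
    rw [Fin.sum_univ_eq_sum_range (fun j => weight j * g (Equiv.swap j (n - 1) i))]
    exact hg.eq_swap_combination hgpos i
  · refine Fin.cases ⟨exists_card_le_pred_of_eq_zero (by omega) hg.last_eq_zero, hgl1, hgle⟩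
      (fun j => ?_) t
    simp only [Fin.cons_succ]
    refine ⟨exists_card_le_pred_of_eq_zero (i₀ := j) (by omega) (by simp [hg.last_eq_zero]), ?_,
      fun i hi => hgle _ (swap_apply_lt (by omega) (by omega) hi)⟩
    rw [sum_range_comp_swap (fun i => |g i|) (by omega) (by omega), hgl1]

/-- Single inductive step: a sorted positive vector with `‖v‖₁ ≤ C` and
`v 0 ≤ C/k` is a convex combination of at most `k+1` vectors, each with at most
`n-1` nonzero components, ℓ₁ norm equal to `‖v‖₁`, and ℓ∞ norm at most `C/k`.
(Components are 0-indexed; coordinates beyond `n` are ignored.) -/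
theorem inductive_step_decomposition
    (n k : ℕ) (hk : 0 < k) (hkn : k < n) (C : ℝ) (hC : 0 < C)
    (v : ℕ → ℝ)
    (hsort : ∀ i j, i ≤ j → j < n → v j ≤ v i)
    (hpos : ∀ i < n, 0 < v i)
    (hv1 : ∑ i ∈ Finset.range n, |v i| ≤ C)
    (hmax : v 0 ≤ C / k) :
    ∃ M : ℕ, M ≤ k + 1 ∧
      ∃ (w : Fin M → ℕ → ℝ) (x : Fin M → ℝ),
        (∀ t, 0 ≤ x t) ∧ (∑ t, x t) = 1 ∧
        (∀ i < n, v i = ∑ t, x t * w t i) ∧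
        ∀ t, (∃ s : Finset ℕ, s.card ≤ n - 1 ∧ ∀ i < n, i ∉ s → w t i = 0) ∧
          (∑ i ∈ Finset.range n, |w t i| = ∑ i ∈ Finset.range n, |v i|) ∧
          ∀ i < n, |w t i| ≤ C / k :=
  inductive_step_decomposition_general n k hk hkn C v hsort hpos hv1 hmax
end
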